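/- arXiv:1501.00235 — 10 statements merged into one kernel-verified Lean document; each statement's English description precedes it below -/
import Mathlib

section
/- Let n be an integer with 1 ≤ n ≤ 9, and let a, b₁, …, bₙ be integers with a ≥ 1, b₁ ≥ b₂ ≥ … ≥ bₙ ≥ 0 and a ≥ b₁ + b₂ + b₃ (where bᵢ is interpreted as 0 for i > n). Then: (i) for all odd integers k, e₁, …, eₙ satisfying k² − (e₁² + … + eₙ²) ≥ 9 − n, one has |k·a − Σᵢ eᵢbᵢ| ≥ 3a − Σᵢ bᵢ; and (ii) the maximum of 1 + (a² − Σᵢ bᵢ² − |k·a − Σᵢ eᵢbᵢ|)/2 over all such tuples (k, e₁, …, eₙ) equals (a−1)(a−2)/2 − Σᵢ bᵢ(bᵢ−1)/2, and it is attained at k = 3, e₁ = … = eₙ = 1. -/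
/-!
By the symmetry `c ↦ -c` we may take `k ≥ 3`; part (i) then amounts to
`∑ bᵢ (eᵢ - 1) ≤ (k - 3)(b₁ + b₂ + b₃)`. Abel summation against the nonincreasing `bᵢ`
(which vanish from `n` on) reduces this to the partial sums:
`∑_{i<m} (eᵢ - 1) ≤ (k - 3) min(m, 3)`. For `m ≤ 3` this holds termwise, because every
`eᵢ² ≤ k² - 8` and parity force `eᵢ ≤ k - 2`. For `m ≥ 3` it is Cauchy–Schwarz:
`m (k² - 9 + m) ≤ (3k - 9 + m)²`, the difference being `(9 - m)(k - 3)²`.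
The same summation by parts gives `∑ bᵢ ≤ 3(b₁ + b₂ + b₃) ≤ 3a`, so `c₀·A ≥ 0` and
`h_{c₀}(A)` is the stated value; part (ii) follows since `h_c(A)` decreases in `|c·A|`.
-/

open Finset

theorem sum_range_mul_eq_sum_partial_sums {R : Type*} [CommRing R] (f g : ℕ → R) (n : ℕ) :
    ∑ i ∈ range n, f i * g i =
      ∑ j ∈ range n, (f j - f (j + 1)) * ∑ i ∈ range (j + 1), g i + f n * ∑ i ∈ range n, g i := by
  induction n with
  | zero => simp
  | succ n ih =>
    rw [sum_range_succ (fun i => f i * g i), ih,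
      sum_range_succ (fun j => (f j - f (j + 1)) * ∑ i ∈ range (j + 1), g i), sum_range_succ g]
    ring

theorem sum_range_mul_le_of_partial_sums_le {R : Type*} [CommRing R] [PartialOrder R]
    [IsOrderedRing R] {b g h : ℕ → R} {n : ℕ} (hb : ∀ i < n, b (i + 1) ≤ b i) (hbn : 0 ≤ b n)
    (hgh : ∀ m ≤ n, ∑ i ∈ range m, g i ≤ ∑ i ∈ range m, h i) :
    ∑ i ∈ range n, b i * g i ≤ ∑ i ∈ range n, b i * h i := by
  have hpart : ∀ m ≤ n, ∑ i ∈ range m, (g i - h i) ≤ 0 := fun m hm => by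
    rw [sum_sub_distrib, sub_nonpos]
    exact hgh m hm
  rw [← sub_nonpos, ← sum_sub_distrib]
  simp_rw [← mul_sub]
  rw [sum_range_mul_eq_sum_partial_sums]
  refine add_nonpos (sum_nonpos fun j hj => ?_)
    (mul_nonpos_of_nonneg_of_nonpos hbn (hpart n le_rfl))
  rw [mem_range] at hj
  exact mul_nonpos_of_nonneg_of_nonpos (sub_nonneg.2 (hb j hj)) (hpart _ hj)

theorem sum_range_ite_lt_three (m : ℕ) :
    ∑ i ∈ range m, (if i < 3 then (1 : ℤ) else 0) = min (m : ℤ) 3 := by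
  induction m with
  | zero => simp
  | succ m ih =>
    rw [sum_range_succ, ih]
    split_ifs <;> omega

theorem sum_range_mul_ite_lt_three {b : ℕ → ℤ} {n : ℕ} (hzero : ∀ i, n ≤ i → b i = 0) (c : ℤ) :
    ∑ i ∈ range n, b i * (c * if i < 3 then 1 else 0) = c * (b 0 + b 1 + b 2) := by
  have hrange3 : ∑ i ∈ range 3, b i * (c * if i < 3 then 1 else 0) = c * (b 0 + b 1 + b 2) := by
    norm_num [sum_range_succ]
    ring
  rcases le_total n 3 with hn | hn
  · rw [← hrange3]
    refine sum_subset (range_subset_range.2 hn) fun i _ hi => ?_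
    rw [hzero i (by simpa using hi), zero_mul]
  · rw [← hrange3, eq_comm]
    refine sum_subset (range_subset_range.2 hn) fun i _ hi => ?_
    simp_all

theorem one_le_sq_of_odd {x : ℤ} (hx : Odd x) : 1 ≤ x ^ 2 :=
  (one_le_sq_iff_one_le_abs x).2 (Int.one_le_abs (by rintro rfl; simp at hx))

theorem sum_sq_add_card_sdiff_le {ι : Type*} [DecidableEq ι] {s t : Finset ι} {e : ι → ℤ}
    (hts : t ⊆ s) (he : ∀ i ∈ s, Odd (e i)) :
    ∑ i ∈ t, e i ^ 2 + #(s \ t) ≤ ∑ i ∈ s, e i ^ 2 := by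
  rw [← sum_sdiff hts, add_comm]
  gcongr
  simpa using card_nsmul_le_sum (s \ t) (fun i => e i ^ 2) 1
    fun i hi => one_le_sq_of_odd (he i (mem_sdiff.1 hi).1)

theorem le_sub_two_of_sq_lt_sq {k x : ℤ} (hk : Odd k) (hx : Odd x) (hk0 : 0 ≤ k)
    (h : x ^ 2 < k ^ 2) : x ≤ k - 2 := by
  have hxk : x < k := lt_of_pow_lt_pow_left₀ 2 hk0 h
  obtain ⟨p, rfl⟩ := hk
  obtain ⟨q, rfl⟩ := hx
  omega

section

variable {n : ℕ} {k : ℤ} {e : ℕ → ℤ}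

theorem sum_range_sub_one_le (hn9 : n ≤ 9) (hk : Odd k) (hk3 : 3 ≤ k)
    (he : ∀ i < n, Odd (e i)) (hQ : ∑ i ∈ range n, e i ^ 2 ≤ k ^ 2 - 9 + n) {m : ℕ} (hm : m ≤ n) :
    ∑ i ∈ range m, (e i - 1) ≤ (k - 3) * min (m : ℤ) 3 := by
  have he' : ∀ i ∈ range n, Odd (e i) := fun i hi => he i (mem_range.1 hi)
  rcases le_total m 3 with h3 | h3
  · have hle : ∀ i ∈ range m, e i - 1 ≤ k - 3 := by
      intro i hi
      have hin : i ∈ range n := mem_range.2 ((mem_range.1 hi).trans_le hm)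
      have hsq := sum_sq_add_card_sdiff_le (singleton_subset_iff.2 hin) he'
      rw [sum_singleton, card_sdiff_of_subset (singleton_subset_iff.2 hin), card_range,
        card_singleton] at hsq
      have := le_sub_two_of_sq_lt_sq hk (he' i hin) (by omega) (by omega)
      omega
    calc ∑ i ∈ range m, (e i - 1) ≤ ∑ i ∈ range m, (k - 3) := sum_le_sum hle
      _ = (k - 3) * min (m : ℤ) 3 := by
        simp [min_eq_left (by exact_mod_cast h3 : (m : ℤ) ≤ 3)]
        ring
  · have hsub := range_subset_range.2 hm
    have hQm := sum_sq_add_card_sdiff_le hsub he'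
    rw [card_sdiff_of_subset hsub, card_range, card_range] at hQm
    have hm9 : (m : ℤ) ≤ 9 := by omega
    have hCS : (∑ i ∈ range m, e i) ^ 2 ≤ (3 * k - 9 + m) ^ 2 :=
      calc (∑ i ∈ range m, e i) ^ 2 ≤ m * ∑ i ∈ range m, e i ^ 2 := by
            simpa using sq_sum_le_card_mul_sum_sq (s := range m) (f := e)
        _ ≤ m * (k ^ 2 - 9 + m) := by gcongr; omega
        _ ≤ (3 * k - 9 + m) ^ 2 := by nlinarith [mul_nonneg (sub_nonneg.2 hm9) (sq_nonneg (k - 3))]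
    have := (abs_le_of_sq_le_sq' hCS (by omega)).2
    rw [sum_sub_distrib, min_eq_right (by exact_mod_cast h3 : (3 : ℤ) ≤ m)]
    simp only [sum_const, card_range, nsmul_eq_mul, mul_one]
    linarith

end

section

variable {n : ℕ} {b : ℕ → ℤ}

theorem sum_range_le_three_mul (hn9 : n ≤ 9) (hmono : Antitone b)
    (hzero : ∀ i, n ≤ i → b i = 0) : ∑ i ∈ range n, b i ≤ 3 * (b 0 + b 1 + b 2) := by
  have := sum_range_mul_le_of_partial_sums_le (g := fun _ => 1)
    (h := fun i => 3 * if i < 3 then 1 else 0)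
    (fun i _ => hmono i.le_succ) (hzero n le_rfl).ge fun m hm => by
      simp only [sum_const, card_range, nsmul_eq_mul, mul_one, ← mul_sum, sum_range_ite_lt_three]
      omega
  rwa [sum_range_mul_ite_lt_three hzero, sum_congr rfl fun i _ => mul_one (b i)] at this

theorem sum_range_mul_sub_one_le (hn9 : n ≤ 9) (hmono : Antitone b)
    (hzero : ∀ i, n ≤ i → b i = 0) {k : ℤ} {e : ℕ → ℤ} (hk : Odd k) (hk3 : 3 ≤ k)
    (he : ∀ i < n, Odd (e i)) (hQ : ∑ i ∈ range n, e i ^ 2 ≤ k ^ 2 - 9 + n) :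
    ∑ i ∈ range n, b i * (e i - 1) ≤ (k - 3) * (b 0 + b 1 + b 2) := by
  rw [← sum_range_mul_ite_lt_three hzero]
  refine sum_range_mul_le_of_partial_sums_le (fun i _ => hmono i.le_succ) (hzero n le_rfl).ge
    fun m hm => ?_
  rw [← mul_sum, sum_range_ite_lt_three]
  exact sum_range_sub_one_le hn9 hk hk3 he hQ hm

theorem three_mul_sub_sum_le_of_three_le (hn9 : n ≤ 9) (hmono : Antitone b)
    (hzero : ∀ i, n ≤ i → b i = 0) {a : ℤ} (hsum : b 0 + b 1 + b 2 ≤ a) {k : ℤ} {e : ℕ → ℤ}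
    (hk : Odd k) (hk3 : 3 ≤ k) (he : ∀ i < n, Odd (e i))
    (hQ : ∑ i ∈ range n, e i ^ 2 ≤ k ^ 2 - 9 + n) :
    3 * a - ∑ i ∈ range n, b i ≤ k * a - ∑ i ∈ range n, e i * b i := by
  have hsplit : ∑ i ∈ range n, e i * b i = ∑ i ∈ range n, b i * (e i - 1) + ∑ i ∈ range n, b i := by
    rw [← sum_add_distrib]
    exact sum_congr rfl fun i _ => by ring
  have := sum_range_mul_sub_one_le hn9 hmono hzero hk hk3 he hQ
  have := mul_le_mul_of_nonneg_left hsum (sub_nonneg.2 hk3)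
  linarith

theorem three_mul_sub_sum_le_abs (hn9 : n ≤ 9) (hmono : Antitone b)
    (hzero : ∀ i, n ≤ i → b i = 0) {a : ℤ} (hsum : b 0 + b 1 + b 2 ≤ a) {k : ℤ} {e : ℕ → ℤ}
    (hk : Odd k) (he : ∀ i < n, Odd (e i))
    (hge : 9 - (n : ℤ) ≤ k ^ 2 - ∑ i ∈ range n, e i ^ 2) :
    3 * a - ∑ i ∈ range n, b i ≤ |k * a - ∑ i ∈ range n, e i * b i| := by
  have hQ : ∑ i ∈ range n, e i ^ 2 ≤ k ^ 2 - 9 + n := by linarith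
  have hn : (n : ℤ) ≤ ∑ i ∈ range n, e i ^ 2 := by
    simpa using sum_sq_add_card_sdiff_le (empty_subset (range n)) fun i hi => he i (mem_range.1 hi)
  rcases le_total 0 k with hk0 | hk0
  · exact (three_mul_sub_sum_le_of_three_le hn9 hmono hzero hsum hk (by nlinarith) he hQ).trans
      (le_abs_self _)
  · -- `-c` has the same square as `c` and the opposite pairing with `A`
    have := three_mul_sub_sum_le_of_three_le hn9 hmono hzero hsum (e := fun i => -e i) hk.neg
      (by nlinarith) (fun i hi => (he i hi).neg) (by simpa using hQ)
    simp only [neg_mul, sum_neg_distrib] at this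
    linarith [neg_le_abs (k * a - ∑ i ∈ range n, e i * b i)]

end

theorem ediv_two_sub_sum_ediv_two_eq (a : ℤ) (b : ℕ → ℤ) (n : ℕ) :
    (a - 1) * (a - 2) / 2 - ∑ i ∈ range n, b i * (b i - 1) / 2 =
      1 + (a ^ 2 - ∑ i ∈ range n, b i ^ 2 - (3 * a - ∑ i ∈ range n, b i)) / 2 := by
  have ha : 2 * ((a - 1) * (a - 2) / 2) = (a - 1) * (a - 2) :=
    Int.two_mul_ediv_two_of_even (by simpa [sub_sub, mul_comm] using (a - 1).even_mul_pred_self)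
  have hb : 2 * ∑ i ∈ range n, b i * (b i - 1) / 2 =
      ∑ i ∈ range n, b i ^ 2 - ∑ i ∈ range n, b i := by
    rw [mul_sum, ← sum_sub_distrib]
    refine sum_congr rfl fun i _ => ?_
    rw [Int.two_mul_ediv_two_of_even (b i).even_mul_pred_self]
    ring
  have hnum : a ^ 2 - ∑ i ∈ range n, b i ^ 2 - (3 * a - ∑ i ∈ range n, b i) =
      2 * ((a - 1) * (a - 2) / 2 - ∑ i ∈ range n, b i * (b i - 1) / 2 - 1) := by
    rw [mul_sub, mul_sub, ha, hb]; ring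
  rw [hnum, Int.mul_ediv_cancel_left _ two_ne_zero]
  ring

theorem stmt_0_general (n : ℕ) (hn9 : n ≤ 9)
    (a : ℤ) (b : ℕ → ℤ)
    (hmono : ∀ i j : ℕ, i ≤ j → b j ≤ b i)
    (hzero : ∀ i : ℕ, n ≤ i → b i = 0)
    (hsum : b 0 + b 1 + b 2 ≤ a) :
    (∀ (k : ℤ) (e : ℕ → ℤ), Odd k → (∀ i < n, Odd (e i)) →
        9 - (n : ℤ) ≤ k ^ 2 - ∑ i ∈ Finset.range n, (e i) ^ 2 →
        3 * a - ∑ i ∈ Finset.range n, b i ≤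
          |k * a - ∑ i ∈ Finset.range n, e i * b i|) ∧
    IsGreatest
      {x : ℤ | ∃ (k : ℤ) (e : ℕ → ℤ), Odd k ∧ (∀ i < n, Odd (e i)) ∧
        9 - (n : ℤ) ≤ k ^ 2 - ∑ i ∈ Finset.range n, (e i) ^ 2 ∧
        x = 1 + (a ^ 2 - ∑ i ∈ Finset.range n, (b i) ^ 2 -
          |k * a - ∑ i ∈ Finset.range n, e i * b i|) / 2}
      ((a - 1) * (a - 2) / 2 - ∑ i ∈ Finset.range n, b i * (b i - 1) / 2) ∧
    (a - 1) * (a - 2) / 2 - ∑ i ∈ Finset.range n, b i * (b i - 1) / 2 =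
      1 + (a ^ 2 - ∑ i ∈ Finset.range n, (b i) ^ 2 -
        |3 * a - ∑ i ∈ Finset.range n, 1 * b i|) / 2 := by
  have hc0 : |3 * a - ∑ i ∈ range n, 1 * b i| = 3 * a - ∑ i ∈ range n, b i := by
    simp only [one_mul]
    exact abs_of_nonneg (by linarith [sum_range_le_three_mul hn9 hmono hzero])
  have hval := ediv_two_sub_sum_ediv_two_eq a b n
  rw [← hc0] at hval
  refine ⟨fun _ _ hk he hge => three_mul_sub_sum_le_abs hn9 hmono hzero hsum hk he hge,
    ⟨⟨3, fun _ => 1, by decide, fun _ _ => odd_one, by simp, hval⟩, ?_⟩, hval⟩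
  rintro x ⟨k, e, hk, he, hge, rfl⟩
  rw [hval, hc0]
  have := three_mul_sub_sum_le_abs hn9 hmono hzero hsum hk he hge
  gcongr 1 + ?_
  exact Int.ediv_le_ediv two_pos (by linarith)

/-- Computation of the genus function `h` on the lattice `⟨1⟩ ⊕ n⟨−1⟩` for a reduced class
`A = aH − Σ bᵢEᵢ`: every adjunction (characteristic) class `c = kH − Σ eᵢEᵢ` with all
coefficients odd and `c·c ≥ 9 − n` satisfies `|c·A| ≥ c₀·A = 3a − Σ bᵢ`, and the maximum of
`h_c(A) = 1 + (A·A − |c·A|)/2` equals `(a−1)(a−2)/2 − Σ bᵢ(bᵢ−1)/2`, attained at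
`k = 3`, `e₁ = ⋯ = eₙ = 1`.  The coefficients `bᵢ` are indexed from `0`, so `b 0 = b₁`, etc.,
and `b i = 0` for `i ≥ n`. -/
theorem stmt_0 (n : ℕ) (hn1 : 1 ≤ n) (hn9 : n ≤ 9)
    (a : ℤ) (b : ℕ → ℤ) (ha : 1 ≤ a)
    (hmono : ∀ i j : ℕ, i ≤ j → b j ≤ b i)
    (hzero : ∀ i : ℕ, n ≤ i → b i = 0)
    (hsum : b 0 + b 1 + b 2 ≤ a) :
    (∀ (k : ℤ) (e : ℕ → ℤ), Odd k → (∀ i < n, Odd (e i)) →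
        9 - (n : ℤ) ≤ k ^ 2 - ∑ i ∈ Finset.range n, (e i) ^ 2 →
        3 * a - ∑ i ∈ Finset.range n, b i ≤
          |k * a - ∑ i ∈ Finset.range n, e i * b i|) ∧
    IsGreatest
      {x : ℤ | ∃ (k : ℤ) (e : ℕ → ℤ), Odd k ∧ (∀ i < n, Odd (e i)) ∧
        9 - (n : ℤ) ≤ k ^ 2 - ∑ i ∈ Finset.range n, (e i) ^ 2 ∧
        x = 1 + (a ^ 2 - ∑ i ∈ Finset.range n, (b i) ^ 2 -
          |k * a - ∑ i ∈ Finset.range n, e i * b i|) / 2}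
      ((a - 1) * (a - 2) / 2 - ∑ i ∈ Finset.range n, b i * (b i - 1) / 2) ∧
    (a - 1) * (a - 2) / 2 - ∑ i ∈ Finset.range n, b i * (b i - 1) / 2 =
      1 + (a ^ 2 - ∑ i ∈ Finset.range n, (b i) ^ 2 -
        |3 * a - ∑ i ∈ Finset.range n, 1 * b i|) / 2 :=
  stmt_0_general n hn9 a b hmono hzero hsum
end

section
/- Let n be an integer with 1 ≤ n ≤ 9, and let a, b₁, …, bₙ be integers with a ≥ 1, b₁ ≥ b₂ ≥ … ≥ bₙ ≥ 0 and a ≥ b₁ + b₂ + b₃ (where bᵢ is interpreted as 0 for i > n). Set h = (a−1)(a−2)/2 − Σᵢ₌₁ⁿ bᵢ(bᵢ−1)/2. Then h ≤ 0 if and only if one of the following holds: (i) b₁ = a and bᵢ = 0 for all i ≥ 2; (ii) a ∈ {1, 2} and bᵢ = 0 for all i; (iii) a = b₁ + 1 with b₁ ≥ 1, b₂ ≤ 1, and bᵢ = 0 for all i ≥ 3. Moreover, h < 0 if and only if b₁ = a ≥ 2 and bᵢ = 0 for all i ≥ 2. -/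
private lemma mlem (x y : ℤ) (hx : 0 ≤ x) (hxy : x ≤ y) : x * (x - 1) ≤ y * (y - 1) := by
  rcases lt_or_ge x 1 with h | h
  · have hx0 : x = 0 := by omega
    subst hx0
    rcases lt_or_ge y 1 with h' | h'
    · have hy0 : y = 0 := by omega
      subst hy0; norm_num
    · nlinarith
  · nlinarith [mul_nonneg (sub_nonneg.2 hxy) (by linarith : (0:ℤ) ≤ x + y - 1)]

private lemma pnn (x : ℤ) (hx : 0 ≤ x) : 0 ≤ x * (x - 1) := by
  simpa using mlem 0 x le_rfl hx

private lemma myDivHelper (X Y Z : ℤ) (h1 : 2 ∣ X) (h2 : 2 * Y = Z) :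
    (X / 2 - Y ≤ 0 ↔ X - Z ≤ 0) ∧ (X / 2 - Y < 0 ↔ X - Z < 0) := by omega

private lemma key (a c0 c1 c2 c3 c4 c5 c6 c7 c8 : ℤ)
    (ha : 1 ≤ a)
    (h01 : c1 ≤ c0) (h12 : c2 ≤ c1) (h23 : c3 ≤ c2) (h34 : c4 ≤ c3)
    (h45 : c5 ≤ c4) (h56 : c6 ≤ c5) (h67 : c7 ≤ c6) (h78 : c8 ≤ c7) (h8 : 0 ≤ c8)
    (hsum : c0 + c1 + c2 ≤ a) :
    ((a - 1) * (a - 2) -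
        (c0*(c0-1)+c1*(c1-1)+c2*(c2-1)+c3*(c3-1)+c4*(c4-1)+c5*(c5-1)+c6*(c6-1)+c7*(c7-1)+c8*(c8-1)) ≤ 0 ↔
      ((c0 = a ∧ c1 = 0) ∨ ((a = 1 ∨ a = 2) ∧ c0 = 0) ∨
        (a = c0 + 1 ∧ 1 ≤ c0 ∧ c1 ≤ 1 ∧ c2 = 0))) ∧
    ((a - 1) * (a - 2) -
        (c0*(c0-1)+c1*(c1-1)+c2*(c2-1)+c3*(c3-1)+c4*(c4-1)+c5*(c5-1)+c6*(c6-1)+c7*(c7-1)+c8*(c8-1)) < 0 ↔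
      (c0 = a ∧ 2 ≤ a ∧ c1 = 0)) := by
  have hle :
      ((a - 1) * (a - 2) -
        (c0*(c0-1)+c1*(c1-1)+c2*(c2-1)+c3*(c3-1)+c4*(c4-1)+c5*(c5-1)+c6*(c6-1)+c7*(c7-1)+c8*(c8-1)) ≤ 0 ↔
      ((c0 = a ∧ c1 = 0) ∨ ((a = 1 ∨ a = 2) ∧ c0 = 0) ∨
        (a = c0 + 1 ∧ 1 ≤ c0 ∧ c1 ≤ 1 ∧ c2 = 0))) := by
    constructor
    · intro hT
      by_cases hc0 : c0 = a
      · left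
        exact ⟨hc0, by omega⟩
      · have hc0a : c0 ≤ a - 1 := by omega
        by_cases hc1 : c1 = 0
        · -- all later coefficients vanish
          obtain ⟨e2, e3, e4, e5, e6, e7, e8⟩ :
              c2 = 0 ∧ c3 = 0 ∧ c4 = 0 ∧ c5 = 0 ∧ c6 = 0 ∧ c7 = 0 ∧ c8 = 0 := by omega
          subst hc1 e2 e3 e4 e5 e6 e7 e8
          by_cases hd : c0 = a - 1
          · by_cases h1c0 : 1 ≤ c0
            · right; right; exact ⟨by omega, h1c0, by omega, rfl⟩
            · right; left
              constructor
              · left; omega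
              · omega
          · -- c0 ≤ a - 2 : derive a ≤ 2
            have hc0n : 0 ≤ c0 := by omega
            have h1 : c0 * (c0 - 1) ≤ (a - 2) * (a - 2 - 1) := mlem _ _ hc0n (by omega)
            have h2 : a ≤ 2 := by nlinarith
            right; left
            constructor
            · omega
            · omega
        · have hc1' : 1 ≤ c1 := by omega
          by_cases hc2 : c2 = 0
          · obtain ⟨e3, e4, e5, e6, e7, e8⟩ :
                c3 = 0 ∧ c4 = 0 ∧ c5 = 0 ∧ c6 = 0 ∧ c7 = 0 ∧ c8 = 0 := by omega
            subst hc2 e3 e4 e5 e6 e7 e8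
            by_cases hb : 2 ≤ c1
            · exfalso
              have hc0n : 0 ≤ c0 := by omega
              have h1 : c0 * (c0 - 1) ≤ (a - c1) * (a - c1 - 1) := mlem _ _ hc0n (by omega)
              have h2 : (0:ℤ) < (c1 - 1) * (a - c1 - 1) :=
                mul_pos (by omega) (by omega)
              nlinarith
            · -- c1 = 1
              have hc1e : c1 = 1 := by omega
              subst hc1e
              by_cases ha' : a = c0 + 1
              · right; right; exact ⟨ha', by omega, le_rfl, rfl⟩
              · exfalso
                have hc0n : 0 ≤ c0 := by omega
                have h1 : (c0 + 1) * c0 ≤ (a - 1) * (a - 1 - 1) := by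
                  have := mlem (c0 + 1) (a - 1) (by omega) (by omega)
                  calc (c0 + 1) * c0 = (c0 + 1) * ((c0 + 1) - 1) := by ring
                    _ ≤ (a - 1) * (a - 1 - 1) := this
                nlinarith
          · -- c2 ≥ 1 : contradiction
            exfalso
            have hc2' : 1 ≤ c2 := by omega
            have m3 : c3 * (c3 - 1) ≤ c2 * (c2 - 1) := mlem _ _ (by omega) h23
            have m4 : c4 * (c4 - 1) ≤ c2 * (c2 - 1) := mlem _ _ (by omega) (by omega)
            have m5 : c5 * (c5 - 1) ≤ c2 * (c2 - 1) := mlem _ _ (by omega) (by omega)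
            have m6 : c6 * (c6 - 1) ≤ c2 * (c2 - 1) := mlem _ _ (by omega) (by omega)
            have m7 : c7 * (c7 - 1) ≤ c2 * (c2 - 1) := mlem _ _ (by omega) (by omega)
            have m8 : c8 * (c8 - 1) ≤ c2 * (c2 - 1) := mlem _ _ h8 (by omega)
            have hS : (c0 + c1 + c2 - 1) * (c0 + c1 + c2 - 1 - 1) ≤ (a - 1) * (a - 1 - 1) :=
              mlem _ _ (by omega) (by omega)
            have p1 : (0:ℤ) ≤ (c2 - 1) * (c0 - c2) := mul_nonneg (by omega) (by omega)
            have p2 : (0:ℤ) ≤ (c2 - 1) * (c1 - c2) := mul_nonneg (by omega) (by omega)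
            have p3 : (0:ℤ) ≤ (c0 - c2) * (c1 - c2) := mul_nonneg (by omega) (by omega)
            have p4 : (0:ℤ) ≤ c2 * (c0 - c2) := mul_nonneg (by omega) (by omega)
            have p5 : (0:ℤ) ≤ c2 * (c1 - c2) := mul_nonneg (by omega) (by omega)
            nlinarith [hT, m3, m4, m5, m6, m7, m8, hS, p1, p2, p3, p4, p5]
    · rintro (⟨rfl, hc1⟩ | ⟨ha12, hc0⟩ | ⟨rfl, h1c0, hc1le, hc2⟩)
      · obtain ⟨e2, e3, e4, e5, e6, e7, e8⟩ :
            c2 = 0 ∧ c3 = 0 ∧ c4 = 0 ∧ c5 = 0 ∧ c6 = 0 ∧ c7 = 0 ∧ c8 = 0 := by omega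
        subst hc1 e2 e3 e4 e5 e6 e7 e8
        nlinarith
      · obtain ⟨e1, e2, e3, e4, e5, e6, e7, e8⟩ :
            c1 = 0 ∧ c2 = 0 ∧ c3 = 0 ∧ c4 = 0 ∧ c5 = 0 ∧ c6 = 0 ∧ c7 = 0 ∧ c8 = 0 := by omega
        subst hc0 e1 e2 e3 e4 e5 e6 e7 e8
        rcases ha12 with rfl | rfl <;> norm_num
      · obtain ⟨e3, e4, e5, e6, e7, e8⟩ :
            c3 = 0 ∧ c4 = 0 ∧ c5 = 0 ∧ c6 = 0 ∧ c7 = 0 ∧ c8 = 0 := by omega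
        subst hc2 e3 e4 e5 e6 e7 e8
        have hc1n : 0 ≤ c1 := by omega
        have : c1 * (c1 - 1) = 0 := by
          rcases (by omega : c1 = 0 ∨ c1 = 1) with rfl | rfl <;> norm_num
        nlinarith
  refine ⟨hle, ?_⟩
  constructor
  · intro hT
    have hT' := le_of_lt hT
    rcases hle.1 hT' with (⟨hc0, hc1⟩ | ⟨ha12, hc0⟩ | ⟨ha', h1c0, hc1le, hc2⟩)
    · refine ⟨hc0, ?_, hc1⟩
      by_contra h
      have ha1 : a = 1 := by omega
      obtain ⟨e2, e3, e4, e5, e6, e7, e8⟩ :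
          c2 = 0 ∧ c3 = 0 ∧ c4 = 0 ∧ c5 = 0 ∧ c6 = 0 ∧ c7 = 0 ∧ c8 = 0 := by omega
      rw [hc0, hc1, e2, e3, e4, e5, e6, e7, e8, ha1] at hT
      norm_num at hT
    · exfalso
      obtain ⟨e1, e2, e3, e4, e5, e6, e7, e8⟩ :
          c1 = 0 ∧ c2 = 0 ∧ c3 = 0 ∧ c4 = 0 ∧ c5 = 0 ∧ c6 = 0 ∧ c7 = 0 ∧ c8 = 0 := by omega
      rw [hc0, e1, e2, e3, e4, e5, e6, e7, e8] at hT
      rcases ha12 with rfl | rfl <;> norm_num at hT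
    · exfalso
      obtain ⟨e3, e4, e5, e6, e7, e8⟩ :
          c3 = 0 ∧ c4 = 0 ∧ c5 = 0 ∧ c6 = 0 ∧ c7 = 0 ∧ c8 = 0 := by omega
      have hc1z : c1 * (c1 - 1) = 0 := by
        rcases (by omega : c1 = 0 ∨ c1 = 1) with rfl | rfl <;> norm_num
      rw [ha', hc2, e3, e4, e5, e6, e7, e8] at hT
      nlinarith
  · rintro ⟨rfl, ha2, hc1⟩
    obtain ⟨e2, e3, e4, e5, e6, e7, e8⟩ :
        c2 = 0 ∧ c3 = 0 ∧ c4 = 0 ∧ c5 = 0 ∧ c6 = 0 ∧ c7 = 0 ∧ c8 = 0 := by omega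
    subst hc1 e2 e3 e4 e5 e6 e7 e8
    nlinarith

/-- Classification of the reduced classes `A = aH − Σ bᵢEᵢ` in `⟨1⟩ ⊕ n⟨−1⟩` (with `1 ≤ n ≤ 9`)
whose genus bound `h = (a−1)(a−2)/2 − Σ bᵢ(bᵢ−1)/2` is non-positive (resp. negative).
The coefficients are indexed from `0`, so `b 0 = b₁`, etc., and `b i = 0` for `i ≥ n`. -/
theorem stmt_1 (n : ℕ) (hn1 : 1 ≤ n) (hn9 : n ≤ 9)
    (a : ℤ) (b : ℕ → ℤ) (ha : 1 ≤ a)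
    (hmono : ∀ i j : ℕ, i ≤ j → b j ≤ b i)
    (hzero : ∀ i : ℕ, n ≤ i → b i = 0)
    (hsum : b 0 + b 1 + b 2 ≤ a) :
    ((a - 1) * (a - 2) / 2 - ∑ i ∈ Finset.range n, b i * (b i - 1) / 2 ≤ 0 ↔
      ((b 0 = a ∧ ∀ i : ℕ, 1 ≤ i → b i = 0) ∨
       ((a = 1 ∨ a = 2) ∧ ∀ i : ℕ, b i = 0) ∨
       (a = b 0 + 1 ∧ 1 ≤ b 0 ∧ b 1 ≤ 1 ∧ ∀ i : ℕ, 2 ≤ i → b i = 0))) ∧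
    ((a - 1) * (a - 2) / 2 - ∑ i ∈ Finset.range n, b i * (b i - 1) / 2 < 0 ↔
      (b 0 = a ∧ 2 ≤ a ∧ ∀ i : ℕ, 1 ≤ i → b i = 0)) := by
  have hbn : ∀ i, 0 ≤ b i := by
    intro i
    rcases le_or_gt n i with h | h
    · rw [hzero i h]
    · have h1 := hmono i n h.le
      have h2 := hzero n le_rfl
      linarith
  have hsum9 : ∑ i ∈ Finset.range n, b i * (b i - 1) / 2
      = ∑ i ∈ Finset.range 9, b i * (b i - 1) / 2 := by
    refine Finset.sum_subset (Finset.range_subset_range.mpr hn9) ?_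
    intro i _ hi
    rw [hzero i (Nat.le_of_not_lt (fun h => hi (Finset.mem_range.mpr h)))]
    norm_num
  have hev : ∀ x : ℤ, 2 ∣ x * (x - 1) := by
    intro x
    have h := Int.even_mul_succ_self (x - 1)
    have hx : x * (x - 1) = (x - 1) * (x - 1 + 1) := by ring
    rw [hx]
    exact h.two_dvd
  have hA2 : 2 ∣ (a - 1) * (a - 2) := by
    have h := Int.even_mul_succ_self (a - 2)
    have hx : (a - 1) * (a - 2) = (a - 2) * (a - 2 + 1) := by ring
    rw [hx]
    exact h.two_dvd
  have hS2 : 2 * (∑ i ∈ Finset.range 9, b i * (b i - 1) / 2)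
      = ∑ i ∈ Finset.range 9, b i * (b i - 1) := by
    rw [Finset.mul_sum]
    exact Finset.sum_congr rfl fun i _ => Int.mul_ediv_cancel' (hev (b i))
  have hexp : ∑ i ∈ Finset.range 9, b i * (b i - 1)
      = b 0*(b 0-1)+b 1*(b 1-1)+b 2*(b 2-1)+b 3*(b 3-1)+b 4*(b 4-1)
        +b 5*(b 5-1)+b 6*(b 6-1)+b 7*(b 7-1)+b 8*(b 8-1) := by
    simp [Finset.sum_range_succ]
  have e0 : (∀ i : ℕ, b i = 0) ↔ b 0 = 0 :=
    ⟨fun h => h 0, fun h i => le_antisymm (le_trans (hmono 0 i (Nat.zero_le i)) h.le) (hbn i)⟩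
  have e1 : (∀ i : ℕ, 1 ≤ i → b i = 0) ↔ b 1 = 0 :=
    ⟨fun h => h 1 le_rfl, fun h i hi => le_antisymm (le_trans (hmono 1 i hi) h.le) (hbn i)⟩
  have e2 : (∀ i : ℕ, 2 ≤ i → b i = 0) ↔ b 2 = 0 :=
    ⟨fun h => h 2 le_rfl, fun h i hi => le_antisymm (le_trans (hmono 2 i hi) h.le) (hbn i)⟩
  obtain ⟨K1, K2⟩ := key a (b 0) (b 1) (b 2) (b 3) (b 4) (b 5) (b 6) (b 7) (b 8) ha
    (hmono 0 1 (by norm_num)) (hmono 1 2 (by norm_num)) (hmono 2 3 (by norm_num))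
    (hmono 3 4 (by norm_num)) (hmono 4 5 (by norm_num)) (hmono 5 6 (by norm_num))
    (hmono 6 7 (by norm_num)) (hmono 7 8 (by norm_num)) (hbn 8) hsum
  constructor
  · rw [hsum9, (myDivHelper _ _ _ hA2 hS2).1, hexp, e1, e0, e2]
    exact K1
  · rw [hsum9, (myDivHelper _ _ _ hA2 hS2).2, hexp, e1]
    exact K2
end

section
/- Let a, b be integers with a ≥ 0, b ≥ 0 and (a, b) ≠ (0, 0). Then: (i) for all integers p, q with p ≠ 0 and p·q ≥ 0, one has |a·p + b·q| ≥ a; and (ii) the maximum of 1 + a·b − |a·p + b·q| over all integers p, q with p ≠ 0 and p·q ≥ 0 equals a(b−1) + 1, and it is attained at (p, q) = (1, 0). -/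
lemma key_3 (a b : ℤ) (ha : 0 ≤ a) (hb : 0 ≤ b) :
    ∀ p q : ℤ, p ≠ 0 → 0 ≤ p * q → a ≤ |a * p + b * q| := by
  intro p q hp hpq
  rcases lt_or_gt_of_ne hp with hneg | hpos
  · have hq : q ≤ 0 := by nlinarith
    have : a * p + b * q ≤ -a := by nlinarith
    calc a ≤ -(a * p + b * q) := by linarith
      _ ≤ |a * p + b * q| := neg_le_abs _
  · have hq : 0 ≤ q := by nlinarith
    have : a ≤ a * p + b * q := by nlinarith
    exact this.trans (le_abs_self _)

/-- Computation of the genus function on the hyperbolic plane `U` with `Im T` generated by `F`: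
for the reduced class `A = aF + bB` (with `a, b ≥ 0`, `(a,b) ≠ (0,0)`), every adjunction class
`c = 2qF + 2pB` with `p ≠ 0` and `pq ≥ 0` satisfies `|c·A|/2 = |ap + bq| ≥ a`, and the maximum
of `h_c(A) = 1 + ab − |ap + bq|` equals `a(b−1) + 1`, attained at `(p, q) = (1, 0)`. -/
theorem stmt_3 (a b : ℤ) (ha : 0 ≤ a) (hb : 0 ≤ b) (hne : ¬(a = 0 ∧ b = 0)) :
    (∀ p q : ℤ, p ≠ 0 → 0 ≤ p * q → a ≤ |a * p + b * q|) ∧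
    IsGreatest
      {x : ℤ | ∃ p q : ℤ, p ≠ 0 ∧ 0 ≤ p * q ∧ x = 1 + a * b - |a * p + b * q|}
      (a * (b - 1) + 1) ∧
    a * (b - 1) + 1 = 1 + a * b - |a * 1 + b * 0| := by
  refine ⟨key_3 a b ha hb, ⟨⟨1, 0, one_ne_zero, by norm_num, ?_⟩, ?_⟩, ?_⟩
  · rw [abs_of_nonneg (by linarith : (0:ℤ) ≤ a * 1 + b * 0)]; ring
  · rintro x ⟨p, q, hp, hpq, rfl⟩
    have := key_3 a b ha hb p q hp hpq
    linarith
  · rw [abs_of_nonneg (by linarith : (0:ℤ) ≤ a * 1 + b * 0)]; ring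
end

section
/- Let a, b be integers with either (a > 0 and (b ≥ 0 or b ≤ −2a)) or (a = 0 and b ≥ 0), and (a, b) ≠ (0, 0). Then: (i) for all integers p, q with p ≠ 0 and p(p + 2q − 1) ≥ 0, one has |(2a + b)p + (p + 2q − 1)b| ≥ |2a + b|; and (ii) the maximum of 1 + (b(2a + b) − |(2a + b)p + (p + 2q − 1)b|)/2 over all such integers p, q equals 1 + (b(2a + b) − |2a + b|)/2, and it is attained at (p, q) = (−1, 1). -/
lemma stmt_4_aux (s b p k : ℤ) (hsb : (0 ≤ s ∧ 0 ≤ b) ∨ (s ≤ 0 ∧ b ≤ 0))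
    (hp : p ≠ 0) (hpk : 0 ≤ p * k) : |s| ≤ |s * p + k * b| := by
  rcases hp.lt_or_gt with hp | hp
  · have hk : k ≤ 0 := by nlinarith
    rcases hsb with ⟨hs, hb⟩ | ⟨hs, hb⟩
    · have h1 : s * (p + 1) ≤ 0 := mul_nonpos_of_nonneg_of_nonpos hs (by linarith)
      have h2 : k * b ≤ 0 := mul_nonpos_of_nonpos_of_nonneg hk hb
      have h3 : -(s * p + k * b) ≤ |s * p + k * b| := neg_le_abs _
      rw [abs_of_nonneg hs]; nlinarith
    · have h1 : 0 ≤ s * (p + 1) := mul_nonneg_of_nonpos_of_nonpos hs (by linarith)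
      have h2 : 0 ≤ k * b := mul_nonneg_of_nonpos_of_nonpos hk hb
      have h3 : s * p + k * b ≤ |s * p + k * b| := le_abs_self _
      rw [abs_of_nonpos hs]; nlinarith
  · have hk : 0 ≤ k := by nlinarith
    rcases hsb with ⟨hs, hb⟩ | ⟨hs, hb⟩
    · have h1 : 0 ≤ s * (p - 1) := mul_nonneg hs (by linarith)
      have h2 : 0 ≤ k * b := mul_nonneg hk hb
      have h3 : s * p + k * b ≤ |s * p + k * b| := le_abs_self _
      rw [abs_of_nonneg hs]; nlinarith
    · have h1 : s * (p - 1) ≤ 0 := mul_nonpos_of_nonpos_of_nonneg hs (by linarith)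
      have h2 : k * b ≤ 0 := mul_nonpos_of_nonneg_of_nonpos hk hb
      have h3 : -(s * p + k * b) ≤ |s * p + k * b| := neg_le_abs _
      rw [abs_of_nonpos hs]; nlinarith

/-- Computation of the genus function on the odd lattice `V` (`F·F = 0`, `B·B = 1`, `F·B = 1`)
with `Im T` generated by `F`: for the reduced class `A = aF + bB` (so `A·A = b(2a+b)`), every
adjunction class `c = (2q−1)F + 2pB` with `p ≠ 0` and `p(p+2q−1) ≥ 0` satisfies
`|c·A| = |(2a+b)p + (p+2q−1)b| ≥ |2a+b|`, and the maximum of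
`h_c(A) = 1 + (b(2a+b) − |c·A|)/2` equals `1 + (b(2a+b) − |2a+b|)/2`,
attained at `(p, q) = (−1, 1)`. -/
theorem stmt_4 (a b : ℤ)
    (hab : (0 < a ∧ (0 ≤ b ∨ b ≤ -2 * a)) ∨ (a = 0 ∧ 0 ≤ b))
    (hne : ¬(a = 0 ∧ b = 0)) :
    (∀ p q : ℤ, p ≠ 0 → 0 ≤ p * (p + 2 * q - 1) →
      |2 * a + b| ≤ |(2 * a + b) * p + (p + 2 * q - 1) * b|) ∧
    IsGreatest
      {x : ℤ | ∃ p q : ℤ, p ≠ 0 ∧ 0 ≤ p * (p + 2 * q - 1) ∧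
        x = 1 + (b * (2 * a + b) - |(2 * a + b) * p + (p + 2 * q - 1) * b|) / 2}
      (1 + (b * (2 * a + b) - |2 * a + b|) / 2) ∧
    1 + (b * (2 * a + b) - |2 * a + b|) / 2 =
      1 + (b * (2 * a + b) -
        |(2 * a + b) * (-1) + ((-1) + 2 * 1 - 1) * b|) / 2 := by
  have hsb : (0 ≤ 2 * a + b ∧ 0 ≤ b) ∨ (2 * a + b ≤ 0 ∧ b ≤ 0) := by omega
  have key : ∀ p q : ℤ, p ≠ 0 → 0 ≤ p * (p + 2 * q - 1) →
      |2 * a + b| ≤ |(2 * a + b) * p + (p + 2 * q - 1) * b| :=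
    fun p q hp hpq => stmt_4_aux (2 * a + b) b p (p + 2 * q - 1) hsb hp hpq
  have habs : (2 * a + b) * (-1) + ((-1) + 2 * 1 - 1) * b = -(2 * a + b) := by ring
  refine ⟨key, ⟨⟨-1, 1, by norm_num, by norm_num, by rw [habs, abs_neg]⟩, ?_⟩,
    by rw [habs, abs_neg]⟩
  rintro x ⟨p, q, hp, hpq, rfl⟩
  have h := key p q hp hpq
  have h2 := Int.ediv_le_ediv (by norm_num : (0:ℤ) < 2)
    (sub_le_sub_left h (b * (2 * a + b)))
  linarith
end

section
/- Let W be a finite-dimensional real vector space equipped with a nondegenerate symmetric bilinear form Γ of signature (1, dim W − 1), i.e., W decomposes as an orthogonal direct sum ℝw ⊕ W⁻ with Γ(w, w) > 0 and Γ negative definite on W⁻. Let V be a finite-dimensional real vector space and let T : V × V → W be an alternating bilinear map such that the 4-linear map (a, b, c, d) ↦ Γ(T(a, b), T(c, d)) is alternating in (a, b, c, d). Then the linear span of the image of T in W has dimension at most 1. -/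
/-- In a cohomology algebra of `b⁺ = 1` type (over ℝ), the image of the alternating pairing
`T : Λ¹ × Λ¹ → Λ²` spans a subspace of dimension at most one.  Here `W` carries a
nondegenerate symmetric bilinear form `Γ` of signature `(1, dim W − 1)`, exhibited by an
orthogonal decomposition `W = ℝw ⊕ W⁻` with `Γ(w,w) > 0` and `Γ` negative definite on `W⁻`,
and the 4-linear map `(a,b,c,d) ↦ Γ(T(a,b), T(c,d))` is alternating. -/
theorem stmt_6 (W : Type*) [AddCommGroup W] [Module ℝ W] [FiniteDimensional ℝ W]
    (Γ : W →ₗ[ℝ] W →ₗ[ℝ] ℝ)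
    (hΓsymm : ∀ x y : W, Γ x y = Γ y x)
    (hΓnondeg : ∀ x : W, (∀ y : W, Γ x y = 0) → x = 0)
    (w : W) (Wneg : Submodule ℝ W)
    (hww : 0 < Γ w w)
    (hneg : ∀ x ∈ Wneg, x ≠ 0 → Γ x x < 0)
    (horth : ∀ x ∈ Wneg, Γ w x = 0)
    (hcompl : IsCompl (Submodule.span ℝ {w}) Wneg)
    (V : Type*) [AddCommGroup V] [Module ℝ V] [FiniteDimensional ℝ V]
    (T : V →ₗ[ℝ] V →ₗ[ℝ] W)
    (hTalt : ∀ v : V, T v v = 0)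
    (halt4 : ∀ a b c d : V,
      (a = b ∨ a = c ∨ a = d ∨ b = c ∨ b = d ∨ c = d) → Γ (T a b) (T c d) = 0) :
    Module.finrank ℝ (Submodule.span ℝ {x : W | ∃ u v : V, T u v = x}) ≤ 1 := by
  classical
  -- decomposition of any vector along w and Wneg
  have hdec : ∀ x : W, ∃ (α : ℝ) (x' : W), x' ∈ Wneg ∧ x = α • w + x' := by
    intro x
    have hx : x ∈ Submodule.span ℝ {w} ⊔ Wneg := by
      rw [hcompl.sup_eq_top]; trivial
    rcases Submodule.mem_sup.mp hx with ⟨p, hp, q, hq, hpq⟩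
    rcases Submodule.mem_span_singleton.mp hp with ⟨α, rfl⟩
    exact ⟨α, q, hq, hpq.symm⟩
  -- Key Lorentzian lemma: two orthogonal null vectors are proportional
  have key : ∀ x y : W, Γ x x = 0 → Γ y y = 0 → Γ x y = 0 → x ≠ 0 →
      y ∈ Submodule.span ℝ {x} := by
    intro x y hxx hyy hxy hx0
    obtain ⟨α, x', hx', hxeq⟩ := hdec x
    obtain ⟨β, y', hy', hyeq⟩ := hdec y
    have hα : α ≠ 0 := by
      rintro rfl
      rw [zero_smul, zero_add] at hxeq
      exact absurd hxx (ne_of_lt (hneg x (hxeq ▸ hx') hx0))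
    have hz : β • x - α • y ∈ Wneg := by
      have heq : β • x - α • y = β • x' - α • y' := by
        rw [hxeq, hyeq]; module
      rw [heq]
      exact Wneg.sub_mem (Wneg.smul_mem _ hx') (Wneg.smul_mem _ hy')
    have hΓz : Γ (β • x - α • y) (β • x - α • y) = 0 := by
      have hyx : Γ y x = 0 := by rw [hΓsymm]; exact hxy
      simp only [map_sub, map_smul, LinearMap.sub_apply, LinearMap.smul_apply,
        smul_eq_mul, hxx, hyy, hxy, hyx]
      ring
    have hz0 : β • x - α • y = 0 := by
      by_contra h
      exact absurd hΓz (ne_of_lt (hneg _ hz h))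
    have hba : β • x = α • y := sub_eq_zero.mp hz0
    have hy : y = α⁻¹ • (β • x) := by
      rw [hba, smul_smul, inv_mul_cancel₀ hα, one_smul]
    rw [hy]
    exact Submodule.smul_mem _ _
      (Submodule.smul_mem _ _ (Submodule.mem_span_singleton_self x))
  -- all values of T are null
  have hnull : ∀ u v : V, Γ (T u v) (T u v) = 0 := fun u v =>
    halt4 u v u v (Or.inr (Or.inl rfl))
  by_cases hT : ∀ u v : V, T u v = 0
  · have hbot : Submodule.span ℝ {x : W | ∃ u v : V, T u v = x} = ⊥ := by
      rw [Submodule.span_eq_bot]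
      rintro x ⟨u, v, rfl⟩
      exact hT u v
    rw [hbot]
    simp
  · push_neg at hT
    obtain ⟨a, b, hab⟩ := hT
    have hmem : ∀ c d : V, T c d ∈ Submodule.span ℝ {T a b} := by
      intro c d
      by_cases hcd0 : T c d = 0
      · simp [hcd0]
      by_cases hbc : T b c = 0
      · -- then Γ (T a b) (T c d) = 0 by expanding Γ(T(a+c)b, T(a+c)d) = 0
        have hTcb : T c b = 0 := by
          have h := hTalt (b + c)
          simp only [map_add, LinearMap.add_apply, hTalt, hbc] at h
          simpa using h
        have h1 : Γ (T (a + c) b) (T (a + c) d) = 0 :=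
          halt4 _ _ _ _ (Or.inr (Or.inl rfl))
        have had : Γ (T a b) (T a d) = 0 := halt4 a b a d (Or.inr (Or.inl rfl))
        have h2 : Γ (T a b) (T c d) = 0 := by
          simp only [map_add, LinearMap.add_apply, hTcb, map_zero,
            LinearMap.zero_apply, add_zero, zero_add] at h1
          -- h1 : Γ (T a b) (T a d) + Γ (T a b) (T c d) = 0 (roughly)
          rw [had] at h1
          linarith [h1]
        exact key _ _ (hnull a b) (hnull c d) h2 hab
      · -- T b c ≠ 0; both T a b and T c d lie on the line through T b c
        have hxy : Γ (T b c) (T a b) = 0 :=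
          halt4 b c a b (Or.inr (Or.inr (Or.inl rfl)))
        have hxy2 : Γ (T b c) (T c d) = 0 :=
          halt4 b c c d (Or.inr (Or.inr (Or.inr (Or.inl rfl))))
        have h1 := key _ _ (hnull b c) (hnull a b) hxy hbc
        have h2 := key _ _ (hnull b c) (hnull c d) hxy2 hbc
        obtain ⟨s, hs⟩ := Submodule.mem_span_singleton.mp h1
        obtain ⟨t, ht⟩ := Submodule.mem_span_singleton.mp h2
        have hs0 : s ≠ 0 := by
          rintro rfl
          rw [zero_smul] at hs
          exact hab hs.symm
        rw [← ht, ← hs, Submodule.mem_span_singleton]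
        exact ⟨t / s, by rw [smul_smul]; congr 1; field_simp⟩
    have hsub : Submodule.span ℝ {x : W | ∃ u v : V, T u v = x} ≤
        Submodule.span ℝ {T a b} := by
      rw [Submodule.span_le]
      rintro x ⟨u, v, rfl⟩
      exact hmem u v
    calc Module.finrank ℝ (Submodule.span ℝ {x : W | ∃ u v : V, T u v = x})
        ≤ Module.finrank ℝ (Submodule.span ℝ {T a b}) := Submodule.finrank_mono hsub
      _ ≤ 1 := le_of_eq (finrank_span_singleton hab)
end

section
/- Let L = ℤF ⊕ ℤB ⊕ N, where N is the negative of the E8 lattice, equipped with the symmetric bilinear form determined by F·F = B·B = 0, F·B = 1, F and B orthogonal to N, and the negative E8 form on N. Then for every A ∈ L with A·A ≥ 0, there exists a bijective ℤ-linear map φ : L → L preserving the bilinear form such that either φ(A) = aF with a ≥ 0, or φ(A) = aF + bB + ξ with ξ ∈ N, a ≥ |b| ≥ 1, and 4b² > −(ξ·ξ). -/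
set_option maxHeartbeats 1000000

/-- The Gram matrix of the E8 lattice (Bourbaki numbering): diagonal entries `2`,
entries `−1` exactly for the unordered pairs `{1,3},{3,4},{4,5},{5,6},{6,7},{7,8},{2,4}`
(here re-indexed from `0`), and `0` otherwise. -/
def e8Gram : Matrix (Fin 8) (Fin 8) ℤ :=
  !![2, 0, -1, 0, 0, 0, 0, 0;
     0, 2, 0, -1, 0, 0, 0, 0;
     -1, 0, 2, -1, 0, 0, 0, 0;
     0, -1, -1, 2, -1, 0, 0, 0;
     0, 0, 0, -1, 2, -1, 0, 0;
     0, 0, 0, 0, -1, 2, -1, 0;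
     0, 0, 0, 0, 0, -1, 2, -1;
     0, 0, 0, 0, 0, 0, -1, 2]

/-- The symmetric bilinear form on `L = ℤF ⊕ ℤB ⊕ N`, `N = −E8`: an element is a triple
`(a, b, ξ)` standing for `aF + bB + ξ`, with `F·F = B·B = 0`, `F·B = 1`, `F, B ⟂ N`,
and the negative of the E8 form on `N`. -/
def uE8Form (x y : ℤ × ℤ × (Fin 8 → ℤ)) : ℤ :=
  x.1 * y.2.1 + y.1 * x.2.1 - ∑ i, ∑ j, x.2.2 i * e8Gram i j * y.2.2 j

lemma e8g_00 : e8Gram 0 0 = 2 := rfl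
lemma e8g_01 : e8Gram 0 1 = 0 := rfl
lemma e8g_02 : e8Gram 0 2 = -1 := rfl
lemma e8g_03 : e8Gram 0 3 = 0 := rfl
lemma e8g_04 : e8Gram 0 4 = 0 := rfl
lemma e8g_05 : e8Gram 0 5 = 0 := rfl
lemma e8g_06 : e8Gram 0 6 = 0 := rfl
lemma e8g_07 : e8Gram 0 7 = 0 := rfl
lemma e8g_10 : e8Gram 1 0 = 0 := rfl
lemma e8g_11 : e8Gram 1 1 = 2 := rfl
lemma e8g_12 : e8Gram 1 2 = 0 := rfl
lemma e8g_13 : e8Gram 1 3 = -1 := rfl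
lemma e8g_14 : e8Gram 1 4 = 0 := rfl
lemma e8g_15 : e8Gram 1 5 = 0 := rfl
lemma e8g_16 : e8Gram 1 6 = 0 := rfl
lemma e8g_17 : e8Gram 1 7 = 0 := rfl
lemma e8g_20 : e8Gram 2 0 = -1 := rfl
lemma e8g_21 : e8Gram 2 1 = 0 := rfl
lemma e8g_22 : e8Gram 2 2 = 2 := rfl
lemma e8g_23 : e8Gram 2 3 = -1 := rfl
lemma e8g_24 : e8Gram 2 4 = 0 := rfl
lemma e8g_25 : e8Gram 2 5 = 0 := rfl
lemma e8g_26 : e8Gram 2 6 = 0 := rfl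
lemma e8g_27 : e8Gram 2 7 = 0 := rfl
lemma e8g_30 : e8Gram 3 0 = 0 := rfl
lemma e8g_31 : e8Gram 3 1 = -1 := rfl
lemma e8g_32 : e8Gram 3 2 = -1 := rfl
lemma e8g_33 : e8Gram 3 3 = 2 := rfl
lemma e8g_34 : e8Gram 3 4 = -1 := rfl
lemma e8g_35 : e8Gram 3 5 = 0 := rfl
lemma e8g_36 : e8Gram 3 6 = 0 := rfl
lemma e8g_37 : e8Gram 3 7 = 0 := rfl
lemma e8g_40 : e8Gram 4 0 = 0 := rfl
lemma e8g_41 : e8Gram 4 1 = 0 := rfl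
lemma e8g_42 : e8Gram 4 2 = 0 := rfl
lemma e8g_43 : e8Gram 4 3 = -1 := rfl
lemma e8g_44 : e8Gram 4 4 = 2 := rfl
lemma e8g_45 : e8Gram 4 5 = -1 := rfl
lemma e8g_46 : e8Gram 4 6 = 0 := rfl
lemma e8g_47 : e8Gram 4 7 = 0 := rfl
lemma e8g_50 : e8Gram 5 0 = 0 := rfl
lemma e8g_51 : e8Gram 5 1 = 0 := rfl
lemma e8g_52 : e8Gram 5 2 = 0 := rfl
lemma e8g_53 : e8Gram 5 3 = 0 := rfl
lemma e8g_54 : e8Gram 5 4 = -1 := rfl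
lemma e8g_55 : e8Gram 5 5 = 2 := rfl
lemma e8g_56 : e8Gram 5 6 = -1 := rfl
lemma e8g_57 : e8Gram 5 7 = 0 := rfl
lemma e8g_60 : e8Gram 6 0 = 0 := rfl
lemma e8g_61 : e8Gram 6 1 = 0 := rfl
lemma e8g_62 : e8Gram 6 2 = 0 := rfl
lemma e8g_63 : e8Gram 6 3 = 0 := rfl
lemma e8g_64 : e8Gram 6 4 = 0 := rfl
lemma e8g_65 : e8Gram 6 5 = -1 := rfl
lemma e8g_66 : e8Gram 6 6 = 2 := rfl
lemma e8g_67 : e8Gram 6 7 = -1 := rfl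
lemma e8g_70 : e8Gram 7 0 = 0 := rfl
lemma e8g_71 : e8Gram 7 1 = 0 := rfl
lemma e8g_72 : e8Gram 7 2 = 0 := rfl
lemma e8g_73 : e8Gram 7 3 = 0 := rfl
lemma e8g_74 : e8Gram 7 4 = 0 := rfl
lemma e8g_75 : e8Gram 7 5 = 0 := rfl
lemma e8g_76 : e8Gram 7 6 = -1 := rfl
lemma e8g_77 : e8Gram 7 7 = 2 := rfl

/-- The E8 bilinear pairing on coordinates. -/
def bil (v w : Fin 8 → ℤ) : ℤ := ∑ i, ∑ j, v i * e8Gram i j * w j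

lemma uE8Form_mk (a b : ℤ) (ξ : Fin 8 → ℤ) (a' b' : ℤ) (ξ' : Fin 8 → ℤ) :
    uE8Form (a, b, ξ) (a', b', ξ') = a * b' + a' * b - bil ξ ξ' := rfl

lemma bil_expand (v w : Fin 8 → ℤ) : bil v w = (2) * v 0 * w 0 + (-1) * v 0 * w 2 + (2) * v 1 * w 1 + (-1) * v 1 * w 3 + (-1) * v 2 * w 0 + (2) * v 2 * w 2 + (-1) * v 2 * w 3 + (-1) * v 3 * w 1 + (-1) * v 3 * w 2 + (2) * v 3 * w 3 + (-1) * v 3 * w 4 + (-1) * v 4 * w 3 + (2) * v 4 * w 4 + (-1) * v 4 * w 5 + (-1) * v 5 * w 4 + (2) * v 5 * w 5 + (-1) * v 5 * w 6 + (-1) * v 6 * w 5 + (2) * v 6 * w 6 + (-1) * v 6 * w 7 + (-1) * v 7 * w 6 + (2) * v 7 * w 7 := by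
  simp only [bil, Fin.sum_univ_eight, e8g_00, e8g_01, e8g_02, e8g_03, e8g_04, e8g_05, e8g_06, e8g_07, e8g_10, e8g_11, e8g_12, e8g_13, e8g_14, e8g_15, e8g_16, e8g_17, e8g_20, e8g_21, e8g_22, e8g_23, e8g_24, e8g_25, e8g_26, e8g_27, e8g_30, e8g_31, e8g_32, e8g_33, e8g_34, e8g_35, e8g_36, e8g_37, e8g_40, e8g_41, e8g_42, e8g_43, e8g_44, e8g_45, e8g_46, e8g_47, e8g_50, e8g_51, e8g_52, e8g_53, e8g_54, e8g_55, e8g_56, e8g_57, e8g_60, e8g_61, e8g_62, e8g_63, e8g_64, e8g_65, e8g_66, e8g_67, e8g_70, e8g_71, e8g_72, e8g_73, e8g_74, e8g_75, e8g_76, e8g_77]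
  ring

/-- Half the E8 norm. -/
def QhE8 (v : Fin 8 → ℤ) : ℤ :=
  v 0^2 + v 1^2 + v 2^2 + v 3^2 + v 4^2 + v 5^2 + v 6^2 + v 7^2
  - v 0 * v 2 - v 1 * v 3 - v 2 * v 3 - v 3 * v 4 - v 4 * v 5 - v 5 * v 6 - v 6 * v 7

lemma bil_self_nonneg (v : Fin 8 → ℤ) : 0 ≤ bil v v := by
  have h : (0:ℚ) ≤ ((bil v v : ℤ) : ℚ) := by
    rw [bil_expand]; push_cast
    linarith [sq_nonneg ((v 0:ℚ) - 1/2*(v 2:ℚ)), sq_nonneg ((v 1:ℚ) - 1/2*(v 3:ℚ)), sq_nonneg ((v 2:ℚ) - 2/3*(v 3:ℚ)), sq_nonneg ((v 3:ℚ) - 6/5*(v 4:ℚ)), sq_nonneg ((v 4:ℚ) - 5/4*(v 5:ℚ)), sq_nonneg ((v 5:ℚ) - 4/3*(v 6:ℚ)), sq_nonneg ((v 6:ℚ) - 3/2*(v 7:ℚ)), sq_nonneg ((v 7:ℚ))]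
  exact_mod_cast h

lemma bil_self_eq_zero {v : Fin 8 → ℤ} (h : bil v v = 0) : v = 0 := by
  have hQ : (((bil v v : ℤ)) : ℚ) = 0 := by rw [h]; norm_num
  rw [bil_expand] at hQ; push_cast at hQ
  have q7 : ((v 7:ℚ))^2 ≤ 0 := by linarith [sq_nonneg ((v 0:ℚ) - 1/2*(v 2:ℚ)), sq_nonneg ((v 1:ℚ) - 1/2*(v 3:ℚ)), sq_nonneg ((v 2:ℚ) - 2/3*(v 3:ℚ)), sq_nonneg ((v 3:ℚ) - 6/5*(v 4:ℚ)), sq_nonneg ((v 4:ℚ) - 5/4*(v 5:ℚ)), sq_nonneg ((v 5:ℚ) - 4/3*(v 6:ℚ)), sq_nonneg ((v 6:ℚ) - 3/2*(v 7:ℚ))]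
  have z7 : ((v 7:ℚ)) = 0 := (pow_eq_zero_iff (two_ne_zero (α := ℕ))).mp (le_antisymm q7 (sq_nonneg _))
  have q6 : ((v 6:ℚ) - 3/2*(v 7:ℚ))^2 ≤ 0 := by linarith [sq_nonneg ((v 0:ℚ) - 1/2*(v 2:ℚ)), sq_nonneg ((v 1:ℚ) - 1/2*(v 3:ℚ)), sq_nonneg ((v 2:ℚ) - 2/3*(v 3:ℚ)), sq_nonneg ((v 3:ℚ) - 6/5*(v 4:ℚ)), sq_nonneg ((v 4:ℚ) - 5/4*(v 5:ℚ)), sq_nonneg ((v 5:ℚ) - 4/3*(v 6:ℚ)), sq_nonneg ((v 7:ℚ))]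
  have z6 : ((v 6:ℚ) - 3/2*(v 7:ℚ)) = 0 := (pow_eq_zero_iff (two_ne_zero (α := ℕ))).mp (le_antisymm q6 (sq_nonneg _))
  have q5 : ((v 5:ℚ) - 4/3*(v 6:ℚ))^2 ≤ 0 := by linarith [sq_nonneg ((v 0:ℚ) - 1/2*(v 2:ℚ)), sq_nonneg ((v 1:ℚ) - 1/2*(v 3:ℚ)), sq_nonneg ((v 2:ℚ) - 2/3*(v 3:ℚ)), sq_nonneg ((v 3:ℚ) - 6/5*(v 4:ℚ)), sq_nonneg ((v 4:ℚ) - 5/4*(v 5:ℚ)), sq_nonneg ((v 6:ℚ) - 3/2*(v 7:ℚ)), sq_nonneg ((v 7:ℚ))]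
  have z5 : ((v 5:ℚ) - 4/3*(v 6:ℚ)) = 0 := (pow_eq_zero_iff (two_ne_zero (α := ℕ))).mp (le_antisymm q5 (sq_nonneg _))
  have q4 : ((v 4:ℚ) - 5/4*(v 5:ℚ))^2 ≤ 0 := by linarith [sq_nonneg ((v 0:ℚ) - 1/2*(v 2:ℚ)), sq_nonneg ((v 1:ℚ) - 1/2*(v 3:ℚ)), sq_nonneg ((v 2:ℚ) - 2/3*(v 3:ℚ)), sq_nonneg ((v 3:ℚ) - 6/5*(v 4:ℚ)), sq_nonneg ((v 5:ℚ) - 4/3*(v 6:ℚ)), sq_nonneg ((v 6:ℚ) - 3/2*(v 7:ℚ)), sq_nonneg ((v 7:ℚ))]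
  have z4 : ((v 4:ℚ) - 5/4*(v 5:ℚ)) = 0 := (pow_eq_zero_iff (two_ne_zero (α := ℕ))).mp (le_antisymm q4 (sq_nonneg _))
  have q3 : ((v 3:ℚ) - 6/5*(v 4:ℚ))^2 ≤ 0 := by linarith [sq_nonneg ((v 0:ℚ) - 1/2*(v 2:ℚ)), sq_nonneg ((v 1:ℚ) - 1/2*(v 3:ℚ)), sq_nonneg ((v 2:ℚ) - 2/3*(v 3:ℚ)), sq_nonneg ((v 4:ℚ) - 5/4*(v 5:ℚ)), sq_nonneg ((v 5:ℚ) - 4/3*(v 6:ℚ)), sq_nonneg ((v 6:ℚ) - 3/2*(v 7:ℚ)), sq_nonneg ((v 7:ℚ))]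
  have z3 : ((v 3:ℚ) - 6/5*(v 4:ℚ)) = 0 := (pow_eq_zero_iff (two_ne_zero (α := ℕ))).mp (le_antisymm q3 (sq_nonneg _))
  have q2 : ((v 2:ℚ) - 2/3*(v 3:ℚ))^2 ≤ 0 := by linarith [sq_nonneg ((v 0:ℚ) - 1/2*(v 2:ℚ)), sq_nonneg ((v 1:ℚ) - 1/2*(v 3:ℚ)), sq_nonneg ((v 3:ℚ) - 6/5*(v 4:ℚ)), sq_nonneg ((v 4:ℚ) - 5/4*(v 5:ℚ)), sq_nonneg ((v 5:ℚ) - 4/3*(v 6:ℚ)), sq_nonneg ((v 6:ℚ) - 3/2*(v 7:ℚ)), sq_nonneg ((v 7:ℚ))]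
  have z2 : ((v 2:ℚ) - 2/3*(v 3:ℚ)) = 0 := (pow_eq_zero_iff (two_ne_zero (α := ℕ))).mp (le_antisymm q2 (sq_nonneg _))
  have q1 : ((v 1:ℚ) - 1/2*(v 3:ℚ))^2 ≤ 0 := by linarith [sq_nonneg ((v 0:ℚ) - 1/2*(v 2:ℚ)), sq_nonneg ((v 2:ℚ) - 2/3*(v 3:ℚ)), sq_nonneg ((v 3:ℚ) - 6/5*(v 4:ℚ)), sq_nonneg ((v 4:ℚ) - 5/4*(v 5:ℚ)), sq_nonneg ((v 5:ℚ) - 4/3*(v 6:ℚ)), sq_nonneg ((v 6:ℚ) - 3/2*(v 7:ℚ)), sq_nonneg ((v 7:ℚ))]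
  have z1 : ((v 1:ℚ) - 1/2*(v 3:ℚ)) = 0 := (pow_eq_zero_iff (two_ne_zero (α := ℕ))).mp (le_antisymm q1 (sq_nonneg _))
  have q0 : ((v 0:ℚ) - 1/2*(v 2:ℚ))^2 ≤ 0 := by linarith [sq_nonneg ((v 1:ℚ) - 1/2*(v 3:ℚ)), sq_nonneg ((v 2:ℚ) - 2/3*(v 3:ℚ)), sq_nonneg ((v 3:ℚ) - 6/5*(v 4:ℚ)), sq_nonneg ((v 4:ℚ) - 5/4*(v 5:ℚ)), sq_nonneg ((v 5:ℚ) - 4/3*(v 6:ℚ)), sq_nonneg ((v 6:ℚ) - 3/2*(v 7:ℚ)), sq_nonneg ((v 7:ℚ))]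
  have z0 : ((v 0:ℚ) - 1/2*(v 2:ℚ)) = 0 := (pow_eq_zero_iff (two_ne_zero (α := ℕ))).mp (le_antisymm q0 (sq_nonneg _))
  have e7 : (v 7:ℚ) = 0 := z7
  have e6 : (v 6:ℚ) = 0 := by linarith
  have e5 : (v 5:ℚ) = 0 := by linarith
  have e4 : (v 4:ℚ) = 0 := by linarith
  have e3 : (v 3:ℚ) = 0 := by linarith
  have e2 : (v 2:ℚ) = 0 := by linarith
  have e1 : (v 1:ℚ) = 0 := by linarith
  have e0 : (v 0:ℚ) = 0 := by linarith
  funext i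
  fin_cases i
  · exact_mod_cast e0
  · exact_mod_cast e1
  · exact_mod_cast e2
  · exact_mod_cast e3
  · exact_mod_cast e4
  · exact_mod_cast e5
  · exact_mod_cast e6
  · exact_mod_cast e7

lemma covering (b : ℤ) (hb : 0 < b) (ξ : Fin 8 → ℤ) :
    ∃ ν : Fin 8 → ℤ, bil (ξ + b • ν) (ξ + b • ν) < 4 * b ^ 2 := by
  have hB : (0:ℚ) < (b:ℚ) := by exact_mod_cast hb
  have hbne : ((b:ℚ)) ≠ 0 := ne_of_gt hB
  have key : ∀ u : ℚ, ∃ r : ℤ, |u - (b:ℚ) * r| ≤ (b:ℚ) / 2 := by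
    intro u
    refine ⟨round (u / (b:ℚ)), ?_⟩
    have h := abs_sub_round (u / (b:ℚ))
    have e : u - (b:ℚ) * round (u / (b:ℚ)) = (b:ℚ) * (u / (b:ℚ) - round (u / (b:ℚ))) := by
      field_simp
    rw [e, abs_mul, abs_of_pos hB]
    nlinarith [abs_nonneg (u / (b:ℚ) - (round (u / (b:ℚ)) : ℚ))]
  obtain ⟨r7, h7⟩ := key ((ξ 7 : ℚ))
  set t7 : ℚ := (ξ 7 : ℚ) - (b:ℚ) * r7 with et7
  have h7' : |t7| ≤ (b:ℚ)/2 := h7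
  obtain ⟨r6, h6⟩ := key ((ξ 6 : ℚ) - 3/2 * t7)
  set t6 : ℚ := (ξ 6 : ℚ) - (b:ℚ) * r6 with et6
  have h6' : |t6 - 3/2 * t7| ≤ (b:ℚ)/2 := by
    have e : t6 - 3/2 * t7 = (ξ 6 : ℚ) - 3/2 * t7 - (b:ℚ) * r6 := by rw [et6]; ring
    rw [e]; exact h6
  obtain ⟨r5, h5⟩ := key ((ξ 5 : ℚ) - 4/3 * t6)
  set t5 : ℚ := (ξ 5 : ℚ) - (b:ℚ) * r5 with et5
  have h5' : |t5 - 4/3 * t6| ≤ (b:ℚ)/2 := by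
    have e : t5 - 4/3 * t6 = (ξ 5 : ℚ) - 4/3 * t6 - (b:ℚ) * r5 := by rw [et5]; ring
    rw [e]; exact h5
  obtain ⟨r4, h4⟩ := key ((ξ 4 : ℚ) - 5/4 * t5)
  set t4 : ℚ := (ξ 4 : ℚ) - (b:ℚ) * r4 with et4
  have h4' : |t4 - 5/4 * t5| ≤ (b:ℚ)/2 := by
    have e : t4 - 5/4 * t5 = (ξ 4 : ℚ) - 5/4 * t5 - (b:ℚ) * r4 := by rw [et4]; ring
    rw [e]; exact h4
  obtain ⟨r3, h3⟩ := key ((ξ 3 : ℚ) - 6/5 * t4)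
  set t3 : ℚ := (ξ 3 : ℚ) - (b:ℚ) * r3 with et3
  have h3' : |t3 - 6/5 * t4| ≤ (b:ℚ)/2 := by
    have e : t3 - 6/5 * t4 = (ξ 3 : ℚ) - 6/5 * t4 - (b:ℚ) * r3 := by rw [et3]; ring
    rw [e]; exact h3
  obtain ⟨r2, h2⟩ := key ((ξ 2 : ℚ) - 2/3 * t3)
  set t2 : ℚ := (ξ 2 : ℚ) - (b:ℚ) * r2 with et2
  have h2' : |t2 - 2/3 * t3| ≤ (b:ℚ)/2 := by
    have e : t2 - 2/3 * t3 = (ξ 2 : ℚ) - 2/3 * t3 - (b:ℚ) * r2 := by rw [et2]; ring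
    rw [e]; exact h2
  obtain ⟨r1, h1⟩ := key ((ξ 1 : ℚ) - 1/2 * t3)
  set t1 : ℚ := (ξ 1 : ℚ) - (b:ℚ) * r1 with et1
  have h1' : |t1 - 1/2 * t3| ≤ (b:ℚ)/2 := by
    have e : t1 - 1/2 * t3 = (ξ 1 : ℚ) - 1/2 * t3 - (b:ℚ) * r1 := by rw [et1]; ring
    rw [e]; exact h1
  obtain ⟨r0, h0⟩ := key ((ξ 0 : ℚ) - 1/2 * t2)
  set t0 : ℚ := (ξ 0 : ℚ) - (b:ℚ) * r0 with et0
  have h0' : |t0 - 1/2 * t2| ≤ (b:ℚ)/2 := by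
    have e : t0 - 1/2 * t2 = (ξ 0 : ℚ) - 1/2 * t2 - (b:ℚ) * r0 := by rw [et0]; ring
    rw [e]; exact h0
  refine ⟨![-r0, -r1, -r2, -r3, -r4, -r5, -r6, -r7], ?_⟩
  have hcast : ((bil (ξ + b • ![-r0, -r1, -r2, -r3, -r4, -r5, -r6, -r7]) (ξ + b • ![-r0, -r1, -r2, -r3, -r4, -r5, -r6, -r7]) : ℤ) : ℚ)
      = 2*t0^2 + 2*t1^2 + 2*t2^2 + 2*t3^2 + 2*t4^2 + 2*t5^2 + 2*t6^2 + 2*t7^2 - 2*(t0*t2 + t1*t3 + t2*t3 + t3*t4 + t4*t5 + t5*t6 + t6*t7) := by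
    rw [bil_expand]
    simp only [Pi.add_apply, Pi.smul_apply, smul_eq_mul, show (![-r0, -r1, -r2, -r3, -r4, -r5, -r6, -r7] : Fin 8 → ℤ) 0 = -r0 from rfl, show (![-r0, -r1, -r2, -r3, -r4, -r5, -r6, -r7] : Fin 8 → ℤ) 1 = -r1 from rfl, show (![-r0, -r1, -r2, -r3, -r4, -r5, -r6, -r7] : Fin 8 → ℤ) 2 = -r2 from rfl, show (![-r0, -r1, -r2, -r3, -r4, -r5, -r6, -r7] : Fin 8 → ℤ) 3 = -r3 from rfl, show (![-r0, -r1, -r2, -r3, -r4, -r5, -r6, -r7] : Fin 8 → ℤ) 4 = -r4 from rfl, show (![-r0, -r1, -r2, -r3, -r4, -r5, -r6, -r7] : Fin 8 → ℤ) 5 = -r5 from rfl, show (![-r0, -r1, -r2, -r3, -r4, -r5, -r6, -r7] : Fin 8 → ℤ) 6 = -r6 from rfl, show (![-r0, -r1, -r2, -r3, -r4, -r5, -r6, -r7] : Fin 8 → ℤ) 7 = -r7 from rfl]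
    push_cast
    rw [et0, et1, et2, et3, et4, et5, et6, et7]
    ring
  have sqb : ∀ x c : ℚ, |x| ≤ c → x^2 ≤ c^2 := by
    intro x c h
    have h2 := abs_le.mp h
    nlinarith [h2.1, h2.2]
  have hlt : 2*t0^2 + 2*t1^2 + 2*t2^2 + 2*t3^2 + 2*t4^2 + 2*t5^2 + 2*t6^2 + 2*t7^2 - 2*(t0*t2 + t1*t3 + t2*t3 + t3*t4 + t4*t5 + t5*t6 + t6*t7) < 4*(b:ℚ)^2 := by
    have s0 : (t0 - 1/2*t2)^2 ≤ ((b:ℚ)/2)^2 := sqb _ _ h0'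
    have s1 : (t1 - 1/2*t3)^2 ≤ ((b:ℚ)/2)^2 := sqb _ _ h1'
    have s2 : (t2 - 2/3*t3)^2 ≤ ((b:ℚ)/2)^2 := sqb _ _ h2'
    have s3 : (t3 - 6/5*t4)^2 ≤ ((b:ℚ)/2)^2 := sqb _ _ h3'
    have s4 : (t4 - 5/4*t5)^2 ≤ ((b:ℚ)/2)^2 := sqb _ _ h4'
    have s5 : (t5 - 4/3*t6)^2 ≤ ((b:ℚ)/2)^2 := sqb _ _ h5'
    have s6 : (t6 - 3/2*t7)^2 ≤ ((b:ℚ)/2)^2 := sqb _ _ h6'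
    have s7 : (t7)^2 ≤ ((b:ℚ)/2)^2 := sqb _ _ h7'
    have hsos : (2*t0^2 + 2*t1^2 + 2*t2^2 + 2*t3^2 + 2*t4^2 + 2*t5^2 + 2*t6^2 + 2*t7^2 - 2*(t0*t2 + t1*t3 + t2*t3 + t3*t4 + t4*t5 + t5*t6 + t6*t7)) = 2*(t0 - 1/2*t2)^2 + 2*(t1 - 1/2*t3)^2 + 3/2*(t2 - 2/3*t3)^2 + 5/6*(t3 - 6/5*t4)^2 + 4/5*(t4 - 5/4*t5)^2 + 3/4*(t5 - 4/3*t6)^2 + 2/3*(t6 - 3/2*t7)^2 + 1/2*t7^2 := by ring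
    have hbsq : (0:ℚ) < (b:ℚ)^2 := by positivity
    rw [hsos]
    linarith [s0, s1, s2, s3, s4, s5, s6, s7, hbsq]
  have hfin : ((bil (ξ + b • ![-r0, -r1, -r2, -r3, -r4, -r5, -r6, -r7]) (ξ + b • ![-r0, -r1, -r2, -r3, -r4, -r5, -r6, -r7]) : ℤ) : ℚ) < ((4 * b ^ 2 : ℤ) : ℚ) := by
    rw [hcast]; push_cast; linarith
  exact_mod_cast hfin

/-- swap of F and B -/
def swE : (ℤ × ℤ × (Fin 8 → ℤ)) ≃ₗ[ℤ] (ℤ × ℤ × (Fin 8 → ℤ)) where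
  toFun x := (x.2.1, x.1, x.2.2)
  invFun x := (x.2.1, x.1, x.2.2)
  map_add' _ _ := rfl
  map_smul' _ _ := rfl
  left_inv _ := rfl
  right_inv _ := rfl

lemma swE_apply (a b : ℤ) (ξ : Fin 8 → ℤ) : swE (a, b, ξ) = (b, a, ξ) := rfl

lemma swE_isom : ∀ x y, uE8Form (swE x) (swE y) = uE8Form x y := by
  intro ⟨a, b, ξ⟩ ⟨a', b', ξ'⟩
  rw [swE_apply, swE_apply, uE8Form_mk, uE8Form_mk]
  ring

/-- negation -/
def negE : (ℤ × ℤ × (Fin 8 → ℤ)) ≃ₗ[ℤ] (ℤ × ℤ × (Fin 8 → ℤ)) where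
  toFun x := -x
  invFun x := -x
  map_add' x y := neg_add x y
  map_smul' c x := by simp
  left_inv x := neg_neg x
  right_inv x := neg_neg x

lemma negE_apply (a b : ℤ) (ξ : Fin 8 → ℤ) : negE (a, b, ξ) = (-a, -b, -ξ) := rfl

lemma negE_isom : ∀ x y, uE8Form (negE x) (negE y) = uE8Form x y := by
  intro ⟨a, b, ξ⟩ ⟨a', b', ξ'⟩
  simp only [negE_apply, uE8Form_mk, bil_expand, Pi.neg_apply]
  ring

/-- Eichler transvection by ν ∈ N along F -/
def tvE (ν : Fin 8 → ℤ) : (ℤ × ℤ × (Fin 8 → ℤ)) ≃ₗ[ℤ] (ℤ × ℤ × (Fin 8 → ℤ)) where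
  toFun x := (x.1 + bil x.2.2 ν + x.2.1 * QhE8 ν, x.2.1, x.2.2 + x.2.1 • ν)
  invFun x := (x.1 - bil x.2.2 ν + x.2.1 * QhE8 ν, x.2.1, x.2.2 - x.2.1 • ν)
  map_add' x y := by
    ext <;> simp [bil_expand, QhE8, Prod.fst_add, Prod.snd_add, Pi.add_apply,
      Pi.smul_apply, smul_eq_mul] <;> try ring
  map_smul' c x := by
    ext <;> simp [bil_expand, QhE8, Prod.smul_fst, Prod.smul_snd, Pi.add_apply,
      Pi.smul_apply, smul_eq_mul] <;> try ring
  left_inv x := by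
    ext <;> simp [bil_expand, QhE8, Pi.add_apply, Pi.sub_apply,
      Pi.smul_apply, smul_eq_mul] <;> try ring
  right_inv x := by
    ext <;> simp [bil_expand, QhE8, Pi.add_apply, Pi.sub_apply,
      Pi.smul_apply, smul_eq_mul] <;> try ring

lemma tvE_apply (ν : Fin 8 → ℤ) (a b : ℤ) (ξ : Fin 8 → ℤ) :
    tvE ν (a, b, ξ) = (a + bil ξ ν + b * QhE8 ν, b, ξ + b • ν) := rfl

lemma tvE_isom (ν : Fin 8 → ℤ) : ∀ x y, uE8Form (tvE ν x) (tvE ν y) = uE8Form x y := by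
  intro ⟨a, b, ξ⟩ ⟨a', b', ξ'⟩
  rw [tvE_apply, tvE_apply, uE8Form_mk, uE8Form_mk]
  simp only [bil_expand, Pi.add_apply, Pi.smul_apply, smul_eq_mul, QhE8]
  ring

/-- the reduction statement -/
def RedP (z : ℤ × ℤ × (Fin 8 → ℤ)) : Prop :=
  (∃ a : ℤ, 0 ≤ a ∧ z = (a, 0, 0)) ∨
  (∃ (a b : ℤ) (ξ : Fin 8 → ℤ), z = (a, b, ξ) ∧ 1 ≤ |b| ∧ |b| ≤ a ∧
    -(uE8Form (0, 0, ξ) (0, 0, ξ)) < 4 * b ^ 2)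

lemma uE8Form_xi (ξ : Fin 8 → ℤ) : uE8Form (0, 0, ξ) (0, 0, ξ) = - bil ξ ξ := by
  rw [uE8Form_mk]; ring

lemma reduceE (n : ℕ) : ∀ a b : ℤ, ∀ ξ : Fin 8 → ℤ, b.natAbs = n → 0 < b →
    0 ≤ uE8Form (a, b, ξ) (a, b, ξ) →
    ∃ φ : (ℤ × ℤ × (Fin 8 → ℤ)) ≃ₗ[ℤ] (ℤ × ℤ × (Fin 8 → ℤ)),
      (∀ x y, uE8Form (φ x) (φ y) = uE8Form x y) ∧ RedP (φ (a, b, ξ)) := by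
  induction n using Nat.strong_induction_on with
  | _ n IH =>
    intro a b ξ hn hb hA
    obtain ⟨ν, hν⟩ := covering b hb ξ
    set a' := a + bil ξ ν + b * QhE8 ν with ha'
    set ξ' := ξ + b • ν with hξ'
    have htv : tvE ν (a, b, ξ) = (a', b, ξ') := tvE_apply ν a b ξ
    have hinv : uE8Form (a', b, ξ') (a', b, ξ') = uE8Form (a, b, ξ) (a, b, ξ) := by
      rw [← htv]; exact tvE_isom ν _ _
    have h1 : 0 ≤ a' * b + a' * b - bil ξ' ξ' := by
      rw [uE8Form_mk] at hinv; rw [hinv]; exact hA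
    have hb0 : 0 ≤ bil ξ' ξ' := bil_self_nonneg ξ'
    have ha'0 : 0 ≤ a' := by nlinarith [h1, hb0, hb]
    by_cases hba : b ≤ a'
    · refine ⟨tvE ν, tvE_isom ν, Or.inr ⟨a', b, ξ', htv, ?_, ?_, ?_⟩⟩
      · rw [abs_of_pos hb]; omega
      · rw [abs_of_pos hb]; exact hba
      · rw [uE8Form_xi]; linarith
    · push_neg at hba
      rcases eq_or_lt_of_le ha'0 with heq | hpos
      · -- a' = 0, so ξ' = 0
        have hz : bil ξ' ξ' = 0 := by nlinarith
        have hξ0 : ξ' = 0 := bil_self_eq_zero hz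
        refine ⟨(tvE ν).trans swE, ?_, Or.inl ⟨b, le_of_lt hb, ?_⟩⟩
        · intro x y
          rw [LinearEquiv.trans_apply, LinearEquiv.trans_apply, swE_isom, tvE_isom]
        · rw [LinearEquiv.trans_apply, htv, ← heq, hξ0, swE_apply]
      · -- 0 < a' < b : recurse
        have hlt : a'.natAbs < n := by omega
        have hsw : 0 ≤ uE8Form (b, a', ξ') (b, a', ξ') := by
          rw [uE8Form_mk]; linarith
        obtain ⟨ψ, hψiso, hψred⟩ := IH a'.natAbs hlt b a' ξ' rfl hpos hsw
        refine ⟨(tvE ν).trans (swE.trans ψ), ?_, ?_⟩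
        · intro x y
          rw [LinearEquiv.trans_apply, LinearEquiv.trans_apply,
            LinearEquiv.trans_apply, LinearEquiv.trans_apply, hψiso, swE_isom, tvE_isom]
        · rw [LinearEquiv.trans_apply, LinearEquiv.trans_apply, htv, swE_apply]
          exact hψred

/-- Every class of non-negative square in `U ⊕ (−E8)` is equivalent, under the group of
isometries, to a reduced class:  either `aF` with `a ≥ 0`, or `aF + bB + ξ` with
`a ≥ |b| ≥ 1` and `4b² > −(ξ·ξ)`. -/
theorem stmt_7 (A : ℤ × ℤ × (Fin 8 → ℤ)) (hA : 0 ≤ uE8Form A A) :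
    ∃ φ : (ℤ × ℤ × (Fin 8 → ℤ)) ≃ₗ[ℤ] (ℤ × ℤ × (Fin 8 → ℤ)),
      (∀ x y, uE8Form (φ x) (φ y) = uE8Form x y) ∧
      ((∃ a : ℤ, 0 ≤ a ∧ φ A = (a, 0, 0)) ∨
       (∃ (a b : ℤ) (ξ : Fin 8 → ℤ), φ A = (a, b, ξ) ∧ 1 ≤ |b| ∧ |b| ≤ a ∧
         -(uE8Form (0, 0, ξ) (0, 0, ξ)) < 4 * b ^ 2)) := by
  obtain ⟨a, b, ξ⟩ := A
  rcases lt_trichotomy b 0 with hb | hb | hb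
  · -- b < 0
    have hneg : negE (a, b, ξ) = (-a, -b, -ξ) := negE_apply a b ξ
    have hA' : 0 ≤ uE8Form (-a, -b, -ξ) (-a, -b, -ξ) := by
      rw [← hneg, negE_isom]; exact hA
    obtain ⟨ψ, hψiso, hψred⟩ := reduceE (-b).natAbs (-a) (-b) (-ξ) rfl (by omega) hA'
    refine ⟨negE.trans ψ, ?_, ?_⟩
    · intro x y
      rw [LinearEquiv.trans_apply, LinearEquiv.trans_apply, hψiso, negE_isom]
    · rw [LinearEquiv.trans_apply, hneg]
      exact hψred
  · -- b = 0
    subst hb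
    have hz : bil ξ ξ = 0 := by
      have h1 := bil_self_nonneg ξ
      rw [uE8Form_mk] at hA
      omega
    have hξ0 : ξ = 0 := bil_self_eq_zero hz
    subst hξ0
    rcases le_or_gt 0 a with ha | ha
    · exact ⟨LinearEquiv.refl ℤ _, fun x y => rfl, Or.inl ⟨a, ha, rfl⟩⟩
    · refine ⟨negE, negE_isom, Or.inl ⟨-a, by omega, ?_⟩⟩
      rw [negE_apply]
      norm_num
  · -- b > 0
    obtain ⟨ψ, hψiso, hψred⟩ := reduceE b.natAbs a b ξ rfl hb hA
    exact ⟨ψ, hψiso, hψred⟩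
end

section
/- Let k, e₁, …, e₉ be odd integers with k > 0, e₁ ≥ e₂ ≥ … ≥ e₉ ≥ 1, and k² ≥ e₁² + … + e₉². Then for all real numbers x₁ ≥ x₂ ≥ … ≥ x₉ ≥ 0 with x₁ + x₂ + x₃ ≤ 1, one has Σᵢ₌₁⁹ (eᵢ − 1)xᵢ ≤ k − 3. -/
private lemma sum_univ_nine' {β : Type*} [AddCommMonoid β] (f : Fin 9 → β) :
    ∑ i, f i = f 0 + f 1 + f 2 + f 3 + f 4 + f 5 + f 6 + f 7 + f 8 := by
  rw [Fin.sum_univ_castSucc, Fin.sum_univ_eight]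
  rfl

/-- The key optimization inequality for the genus function of `⟨1⟩ ⊕ n⟨−1⟩`: if
`k, e₁ ≥ ⋯ ≥ e₉ ≥ 1` are odd with `k > 0` and `k² ≥ Σ eᵢ²`, then for all reals
`x₁ ≥ ⋯ ≥ x₉ ≥ 0` with `x₁ + x₂ + x₃ ≤ 1` one has `Σ (eᵢ − 1)xᵢ ≤ k − 3`. -/
theorem stmt_8 (k : ℤ) (e : Fin 9 → ℤ)
    (hk : Odd k) (he : ∀ i, Odd (e i)) (hkpos : 0 < k)
    (hmono : ∀ i j : Fin 9, i ≤ j → e j ≤ e i) (he1 : ∀ i, 1 ≤ e i)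
    (hsq : ∑ i, (e i) ^ 2 ≤ k ^ 2)
    (x : Fin 9 → ℝ)
    (hxmono : ∀ i j : Fin 9, i ≤ j → x j ≤ x i) (hx0 : ∀ i, 0 ≤ x i)
    (hx123 : x 0 + x 1 + x 2 ≤ 1) :
    ∑ i, ((e i : ℝ) - 1) * x i ≤ (k : ℝ) - 3 := by
  have hcs : (∑ i, e i) ^ 2 ≤ 9 * ∑ i, (e i) ^ 2 := by
    simpa using sq_sum_le_card_mul_sum_sq (s := (Finset.univ : Finset (Fin 9))) (f := e)
  simp only [sum_univ_nine'] at hsq hcs ⊢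
  have h0 := he1 0; have h1 := he1 1; have h2 := he1 2; have h3 := he1 3
  have h4 := he1 4; have h5 := he1 5; have h6 := he1 6; have h7 := he1 7; have h8 := he1 8
  have hsq1 : ∀ i, (1:ℤ) ≤ (e i)^2 := fun i => by
    have := pow_le_pow_left₀ (by norm_num : (0:ℤ) ≤ 1) (he1 i) 2
    simpa using this
  have s0 := hsq1 0; have s1 := hsq1 1; have s2 := hsq1 2; have s3 := hsq1 3; have s4 := hsq1 4
  have s5 := hsq1 5; have s6 := hsq1 6; have s7 := hsq1 7; have s8 := hsq1 8
  have hk9 : 9 ≤ k ^ 2 := by linarith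
  have hk3 : 3 ≤ k :=
    le_of_pow_le_pow_left₀ two_ne_zero hkpos.le (by linarith : (3:ℤ)^2 ≤ k^2)
  have he0k : e 0 < k :=
    lt_of_pow_lt_pow_left₀ 2 hkpos.le (by linarith : (e 0)^2 < k^2)
  have he0 : e 0 ≤ k - 2 := by
    obtain ⟨a, ha⟩ := hk; obtain ⟨b, hb⟩ := he 0; omega
  have he1' : e 1 ≤ k - 2 := le_trans (hmono 0 1 (by decide)) he0
  have hsum : e 0 + e 1 + e 2 + e 3 + e 4 + e 5 + e 6 + e 7 + e 8 ≤ 3 * k := by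
    refine le_of_pow_le_pow_left₀ two_ne_zero (by linarith) ?_
    show (e 0 + e 1 + e 2 + e 3 + e 4 + e 5 + e 6 + e 7 + e 8)^2 ≤ (3*k)^2
    linarith
  have he0R : (e 0 : ℝ) ≤ (k:ℝ) - 2 := by exact_mod_cast he0
  have he1R : (e 1 : ℝ) ≤ (k:ℝ) - 2 := by exact_mod_cast he1'
  have hk3R : (3:ℝ) ≤ (k:ℝ) := by exact_mod_cast hk3
  have hsumR : (e 0 : ℝ) + e 1 + e 2 + e 3 + e 4 + e 5 + e 6 + e 7 + e 8 ≤ 3 * k := by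
    exact_mod_cast hsum
  have heiR : ∀ i : Fin 9, (1:ℝ) ≤ (e i : ℝ) := fun i => by exact_mod_cast he1 i
  have p3 : ((e 3 : ℝ) - 1) * (x 2 - x 3) ≥ 0 :=
    mul_nonneg (by linarith [heiR 3]) (by linarith [hxmono 2 3 (by decide)])
  have p4 : ((e 4 : ℝ) - 1) * (x 2 - x 4) ≥ 0 :=
    mul_nonneg (by linarith [heiR 4]) (by linarith [hxmono 2 4 (by decide)])
  have p5 : ((e 5 : ℝ) - 1) * (x 2 - x 5) ≥ 0 :=
    mul_nonneg (by linarith [heiR 5]) (by linarith [hxmono 2 5 (by decide)])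
  have p6 : ((e 6 : ℝ) - 1) * (x 2 - x 6) ≥ 0 :=
    mul_nonneg (by linarith [heiR 6]) (by linarith [hxmono 2 6 (by decide)])
  have p7 : ((e 7 : ℝ) - 1) * (x 2 - x 7) ≥ 0 :=
    mul_nonneg (by linarith [heiR 7]) (by linarith [hxmono 2 7 (by decide)])
  have p8 : ((e 8 : ℝ) - 1) * (x 2 - x 8) ≥ 0 :=
    mul_nonneg (by linarith [heiR 8]) (by linarith [hxmono 2 8 (by decide)])
  have q0 : ((k:ℝ) - 2 - e 0) * (x 0 - x 2) ≥ 0 :=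
    mul_nonneg (by linarith) (by linarith [hxmono 0 2 (by decide)])
  have q1 : ((k:ℝ) - 2 - e 1) * (x 1 - x 2) ≥ 0 :=
    mul_nonneg (by linarith) (by linarith [hxmono 1 2 (by decide)])
  have q2 : (3 * (k:ℝ) - ((e 0:ℝ) + e 1 + e 2 + e 3 + e 4 + e 5 + e 6 + e 7 + e 8)) * x 2 ≥ 0 :=
    mul_nonneg (by linarith) (hx0 2)
  have q3 : ((k:ℝ) - 3) * (1 - (x 0 + x 1 + x 2)) ≥ 0 :=
    mul_nonneg (by linarith) (by linarith)
  linarith [p3, p4, p5, p6, p7, p8, q0, q1, q2, q3]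
end

section
/- Let x₁ ≥ x₂ ≥ … ≥ x₉ ≥ 0 be real numbers. Then x₁² + x₂² + … + x₉² ≤ (x₁ + x₂ + x₃)². In particular, if x₁ + x₂ + x₃ ≤ 1, then Σᵢ₌₁⁹ xᵢ² ≤ 1. -/
/-- For reals `x₁ ≥ x₂ ≥ ⋯ ≥ x₉ ≥ 0` one has `Σ xᵢ² ≤ (x₁ + x₂ + x₃)²`; in particular,
if `x₁ + x₂ + x₃ ≤ 1` then `Σ xᵢ² ≤ 1`. -/
theorem stmt_9 (x : Fin 9 → ℝ)
    (hxmono : ∀ i j : Fin 9, i ≤ j → x j ≤ x i) (hx0 : ∀ i, 0 ≤ x i) :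
    (∑ i, (x i) ^ 2 ≤ (x 0 + x 1 + x 2) ^ 2) ∧
    (x 0 + x 1 + x 2 ≤ 1 → ∑ i, (x i) ^ 2 ≤ 1) := by
  have hs : ∑ i, (x i) ^ 2 = (x 0)^2 + (x 1)^2 + (x 2)^2 + (x 3)^2 + (x 4)^2
      + (x 5)^2 + (x 6)^2 + (x 7)^2 + (x 8)^2 := by
    rw [Finset.sum_fin_eq_sum_range]
    repeat rw [Finset.sum_range_succ]
    norm_num
    simp only [show (⟨2, by norm_num⟩ : Fin 9) = 2 from rfl, show (⟨3, by norm_num⟩ : Fin 9) = 3 from rfl, show (⟨4, by norm_num⟩ : Fin 9) = 4 from rfl, show (⟨5, by norm_num⟩ : Fin 9) = 5 from rfl, show (⟨6, by norm_num⟩ : Fin 9) = 6 from rfl, show (⟨7, by norm_num⟩ : Fin 9) = 7 from rfl, show (⟨8, by norm_num⟩ : Fin 9) = 8 from rfl]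
  have h10 := hxmono 0 1 (by decide)
  have h21 := hxmono 1 2 (by decide)
  have h32 := hxmono 2 3 (by decide)
  have h43 := hxmono 3 4 (by decide)
  have h54 := hxmono 4 5 (by decide)
  have h65 := hxmono 5 6 (by decide)
  have h76 := hxmono 6 7 (by decide)
  have h87 := hxmono 7 8 (by decide)
  have h0 := hx0 0
  have h8 := hx0 8
  have key : ∑ i, (x i) ^ 2 ≤ (x 0 + x 1 + x 2) ^ 2 := by
    rw [hs]
    nlinarith [mul_nonneg (hx0 0) (hx0 1), mul_nonneg (hx0 1) (hx0 2),
      mul_nonneg (hx0 0) (hx0 2), sq_nonneg (x 3), sq_nonneg (x 4),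
      mul_le_mul h21 h32 (hx0 3) (hx0 1),
      mul_le_mul (h21.trans h10) h43 (hx0 4) (hx0 0),
      mul_le_mul h10 (h54.trans h43) (hx0 5) (hx0 0),
      mul_le_mul h21 (h65.trans (h54.trans h43)) (hx0 6) (hx0 1),
      mul_le_mul (h21.trans h10) (h76.trans (h65.trans h54)) (hx0 7) (hx0 0),
      mul_le_mul h10 (h87.trans (h76.trans (h65.trans (h54.trans h43)))) (hx0 8) (hx0 0)]
  refine ⟨key, fun h => key.trans ?_⟩
  nlinarith [add_nonneg (add_nonneg (hx0 0) (hx0 1)) (hx0 2)]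
end

section
/- Let V be the lattice ℤ² with basis F, B and symmetric bilinear form determined by F·F = 0, B·B = 1 and F·B = 1. If φ : V → V is a bijective ℤ-linear map preserving the bilinear form and φ(ℤF) ⊆ ℤF, then φ = id or φ = −id. -/
/-- The odd unimodular bilinear form of signature `(1,1)` on `V = ℤ²` with basis
`F = (1,0)`, `B = (0,1)`: `F·F = 0`, `B·B = 1`, `F·B = 1`. -/
def vForm (x y : ℤ × ℤ) : ℤ := x.1 * y.2 + x.2 * y.1 + x.2 * y.2

/-- If an isometry of the odd lattice `V` preserves the subgroup `ℤF`, then it is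
`id` or `−id`. -/
theorem stmt_14 (φ : (ℤ × ℤ) ≃ₗ[ℤ] (ℤ × ℤ))
    (hform : ∀ x y : ℤ × ℤ, vForm (φ x) (φ y) = vForm x y)
    (hF : ∀ a : ℤ, ∃ a' : ℤ, φ (a, 0) = (a', 0)) :
    (∀ x : ℤ × ℤ, φ x = x) ∨ (∀ x : ℤ × ℤ, φ x = -x) := by
  obtain ⟨c, hc⟩ := hF 1
  set p := (φ (0, 1)).1 with hp
  set q := (φ (0, 1)).2 with hq
  have hB : φ (0, 1) = (p, q) := rfl
  have h1 : c * q = 1 := by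
    have := hform (1, 0) (0, 1)
    simp [vForm, hc, hB] at this
    linarith
  have h2 : p * q + q * p + q * q = 1 := by
    have := hform (0, 1) (0, 1)
    simp [vForm, hB] at this
    linarith
  rcases Int.eq_one_or_neg_one_of_mul_eq_one' h1 with ⟨hc1, hq1⟩ | ⟨hc1, hq1⟩
  · left
    intro x
    have hp0 : p = 0 := by nlinarith
    have hx : x = x.1 • ((1 : ℤ), (0 : ℤ)) + x.2 • ((0 : ℤ), (1 : ℤ)) := by
      simp [Prod.ext_iff]
    rw [hx, map_add, map_smul, map_smul, hc, hB, hc1, hq1, hp0]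
  · right
    intro x
    have hp0 : p = 0 := by nlinarith
    have hx : x = x.1 • ((1 : ℤ), (0 : ℤ)) + x.2 • ((0 : ℤ), (1 : ℤ)) := by
      simp [Prod.ext_iff]
    rw [hx, map_add, map_smul, map_smul, hc, hB, hc1, hq1, hp0]
    simp [Prod.ext_iff]
end

section
/- Let n be an integer with 1 ≤ n ≤ 9, let a, b₁, …, bₙ be integers with b₁ ≥ b₂ ≥ … ≥ bₙ ≥ 0 and a ≥ b₁ + b₂ + b₃ (where bᵢ is interpreted as 0 for i > n). Then a² − (b₁² + … + bₙ²) ≥ 0 and 3a − (b₁ + … + bₙ) ≥ 0. -/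
/-- A reduced class `A = aH − Σ bᵢEᵢ` in `⟨1⟩ ⊕ n⟨−1⟩` with `1 ≤ n ≤ 9` (so
`b₁ ≥ ⋯ ≥ bₙ ≥ 0` and `a ≥ b₁ + b₂ + b₃`) automatically satisfies `a² − Σ bᵢ² ≥ 0` and
`3a − Σ bᵢ ≥ 0`.  The coefficients are indexed from `0`, so `b 0 = b₁`, etc., and
`b i = 0` for `i ≥ n`. -/
theorem stmt_17 (n : ℕ) (hn1 : 1 ≤ n) (hn9 : n ≤ 9)
    (a : ℤ) (b : ℕ → ℤ)
    (hmono : ∀ i j : ℕ, i ≤ j → b j ≤ b i)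
    (hzero : ∀ i : ℕ, n ≤ i → b i = 0)
    (hsum : b 0 + b 1 + b 2 ≤ a) :
    0 ≤ a ^ 2 - ∑ i ∈ Finset.range n, (b i) ^ 2 ∧
    0 ≤ 3 * a - ∑ i ∈ Finset.range n, b i := by
  have hnonneg : ∀ i : ℕ, 0 ≤ b i := by
    intro i
    rcases le_or_gt n i with h | h
    · rw [hzero i h]
    · have := hmono i n h.le
      rw [hzero n le_rfl] at this
      exact this
  have hs1 : ∑ i ∈ Finset.range n, (b i) ^ 2 = ∑ i ∈ Finset.range 9, (b i) ^ 2 := by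
    refine Finset.sum_subset (Finset.range_subset_range.2 hn9) ?_
    intro i _ hi
    rw [hzero i (le_of_not_gt (fun h => hi (Finset.mem_range.mpr h))), zero_pow two_ne_zero]
  have hs2 : ∑ i ∈ Finset.range n, b i = ∑ i ∈ Finset.range 9, b i := by
    refine Finset.sum_subset (Finset.range_subset_range.2 hn9) ?_
    intro i _ hi
    exact hzero i (le_of_not_gt (fun h => hi (Finset.mem_range.mpr h)))
  rw [hs1, hs2]
  simp only [Finset.sum_range_succ, Finset.sum_range_zero, zero_add]
  have h0 := hnonneg 0
  have h1 := hnonneg 1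
  have h2 := hnonneg 2
  have h8 := hnonneg 8
  have m10 := hmono 0 1 (by norm_num)
  have m21 := hmono 1 2 (by norm_num)
  have m30 := hmono 0 3 (by norm_num)
  have m31 := hmono 1 3 (by norm_num)
  have m40 := hmono 0 4 (by norm_num)
  have m41 := hmono 1 4 (by norm_num)
  have m50 := hmono 0 5 (by norm_num)
  have m52 := hmono 2 5 (by norm_num)
  have m60 := hmono 0 6 (by norm_num)
  have m62 := hmono 2 6 (by norm_num)
  have m71 := hmono 1 7 (by norm_num)
  have m72 := hmono 2 7 (by norm_num)
  have m81 := hmono 1 8 (by norm_num)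
  have m82 := hmono 2 8 (by norm_num)
  have h3 := hnonneg 3
  have h4 := hnonneg 4
  have h5 := hnonneg 5
  have h6 := hnonneg 6
  have h7 := hnonneg 7
  constructor
  · nlinarith [sq_nonneg (b 0 + b 1 + b 2), mul_le_mul m31 m30 h3 h1,
      mul_le_mul m41 m40 h4 h1, mul_le_mul m52 m50 h5 h2,
      mul_le_mul m62 m60 h6 h2, mul_le_mul m72 m71 h7 h2,
      mul_le_mul m82 m81 h8 h2]
  · linarith
end
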